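/- arXiv:2404.14002 — 11 statements merged into one kernel-verified Lean document; each statement's English description precedes it below -/
import Mathlib

section
/- Let x, y ∈ X and a, b, m, n ∈ P be such that ab⁻¹ = mn⁻¹ in G. Then θ_a(x) = θ_b(y) if and only if θ_m(x) = θ_n(y). -/
/-!
Since `G = P P⁻¹`, write `a⁻¹ m = c d⁻¹` with `c, d ∈ P`; then `a c = m d`, and `a b⁻¹ = m n⁻¹`
forces `b c = n d` as well. Applying `θ_c` to `θ_a x = θ_b y` gives `θ_{ac} x = θ_{bc} y`, that is
`θ_d (θ_m x) = θ_d (θ_n y)`, and injectivity of `θ_d` yields `θ_m x = θ_n y`. The converse is the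
same argument with the roles of `(a, b)` and `(m, n)` exchanged.
-/

theorem mul_eq_mul_and_mul_eq_mul_of_mul_inv_eq {G : Type*} [Group G] {a b m n c d : G}
    (h : a * b⁻¹ = m * n⁻¹) (hcd : c * d⁻¹ = a⁻¹ * m) : a * c = m * d ∧ b * c = n * d := by
  have hac : a * c = m * d :=
    calc a * c = a * (c * d⁻¹) * d := by group
      _ = m * d := by rw [hcd]; group
  have hba : b * a⁻¹ = n * m⁻¹ := by simpa using congrArg (·⁻¹) h
  refine ⟨hac, ?_⟩
  calc b * c = b * a⁻¹ * (a * c) := by group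
    _ = n * d := by rw [hba, hac]; group

theorem exists_mul_eq_mul_and_mul_eq_mul_of_mul_inv_eq {G : Type*} [Group G] {P : Set G}
    (hPG : ∀ g : G, ∃ a ∈ P, ∃ b ∈ P, g = a * b⁻¹) {a b m n : G} (h : a * b⁻¹ = m * n⁻¹) :
    ∃ c ∈ P, ∃ d ∈ P, a * c = m * d ∧ b * c = n * d := by
  obtain ⟨c, hc, d, hd, hcd⟩ := hPG (a⁻¹ * m)
  exact ⟨c, hc, d, hd, mul_eq_mul_and_mul_eq_mul_of_mul_inv_eq h hcd.symm⟩

theorem apply_eq_apply_of_mul_inv_eq {G X : Type*} [Group G] {P : Set G}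
    (hPG : ∀ g : G, ∃ a ∈ P, ∃ b ∈ P, g = a * b⁻¹) {θ : G → X → X}
    (hθi : ∀ a ∈ P, Function.Injective (θ a))
    (hθm : ∀ a ∈ P, ∀ b ∈ P, ∀ x : X, θ a (θ b x) = θ (b * a) x)
    {x y : X} {a b m n : G} (ha : a ∈ P) (hb : b ∈ P) (hm : m ∈ P) (hn : n ∈ P)
    (h : a * b⁻¹ = m * n⁻¹) (hxy : θ a x = θ b y) : θ m x = θ n y := by
  obtain ⟨c, hc, d, hd, hac, hbc⟩ := exists_mul_eq_mul_and_mul_eq_mul_of_mul_inv_eq hPG h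
  apply hθi d hd
  calc θ d (θ m x) = θ (a * c) x := by rw [hθm d hd m hm, hac]
    _ = θ c (θ b y) := by rw [← hθm c hc a ha, hxy]
    _ = θ d (θ n y) := by rw [hθm c hc b hb, hbc, hθm d hd n hn]

theorem stmt_0_general {G : Type*} [Group G]
    {X : Type*}
    (P : Set G)
    (hPG : ∀ g : G, ∃ a ∈ P, ∃ b ∈ P, g = a * b⁻¹)
    (θ : G → X → X)
    (hθi : ∀ a ∈ P, Function.Injective (θ a))
    (hθm : ∀ a ∈ P, ∀ b ∈ P, ∀ x : X, θ a (θ b x) = θ (b * a) x)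
    (x y : X) (a b m n : G) (ha : a ∈ P) (hb : b ∈ P) (hm : m ∈ P) (hn : n ∈ P)
    (h : a * b⁻¹ = m * n⁻¹) :
    θ a x = θ b y ↔ θ m x = θ n y :=
  ⟨apply_eq_apply_of_mul_inv_eq hPG hθi hθm ha hb hm hn h,
    apply_eq_apply_of_mul_inv_eq hPG hθi hθm hm hn ha hb h.symm⟩

/-- For a right injective action `θ` of an Ore subsemigroup `P ⊆ G` on a
second-countable compact Hausdorff space `X`: if `a * b⁻¹ = m * n⁻¹` with `a,b,m,n ∈ P`,
then `θ_a x = θ_b y ↔ θ_m x = θ_n y`. -/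
theorem stmt_0 {G : Type*} [Group G] [Countable G]
    {X : Type*} [TopologicalSpace X] [CompactSpace X] [T2Space X]
    [SecondCountableTopology X]
    (P : Set G) (hP1 : (1 : G) ∈ P) (hPmul : ∀ a ∈ P, ∀ b ∈ P, a * b ∈ P)
    (hPG : ∀ g : G, ∃ a ∈ P, ∃ b ∈ P, g = a * b⁻¹)
    (θ : G → X → X)
    (hθc : ∀ a ∈ P, Continuous (θ a))
    (hθi : ∀ a ∈ P, Function.Injective (θ a))
    (hθ1 : θ 1 = id)
    (hθm : ∀ a ∈ P, ∀ b ∈ P, ∀ x : X, θ a (θ b x) = θ (b * a) x)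
    (x y : X) (a b m n : G) (ha : a ∈ P) (hb : b ∈ P) (hm : m ∈ P) (hn : n ∈ P)
    (h : a * b⁻¹ = m * n⁻¹) :
    θ a x = θ b y ↔ θ m x = θ n y :=
  stmt_0_general P hPG θ hθi hθm x y a b m n ha hb hm hn h
end

section
/- The map u : X ⋊ P → X, (x, g) ↦ u(x, g), is continuous, where X ⋊ P carries the subspace topology from X × G with G discrete. -/
/-!
Near a point `(x, g)` of `X ⋊ P` the second coordinate is constant, since `G` is discrete. Fixing
`g = a b⁻¹`, the defining relation gives `θ_b (u(x', g)) = θ_a x'` for all nearby `x'`, and `θ_b` is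
a closed embedding (a continuous injection from a compact space into a Hausdorff one), so `u`
inherits the continuity of `θ_a`.
-/

/-- `Q_x`: the set of `g ∈ G` expressible as `a * b⁻¹` with `a, b ∈ P` such that
`θ_a x = θ_b y` for some `y ∈ X`. -/
def Qset {G X : Type*} [Group G] (P : Set G) (θ : G → X → X) (x : X) : Set G :=
  {g : G | ∃ a ∈ P, ∃ b ∈ P, ∃ y : X, g = a * b⁻¹ ∧ θ a x = θ b y}

open Filter Topology

theorem Topology.IsInducing.continuousAt_of_eventuallyEq {X Y Z : Type*} [TopologicalSpace X]
    [TopologicalSpace Y] [TopologicalSpace Z] {f : X → Y} {g : Y → Z} (hg : IsInducing g)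
    {h : X → Z} {x : X} (hh : ContinuousAt h x) (hhf : h =ᶠ[𝓝 x] g ∘ f) : ContinuousAt f x :=
  hg.continuousAt_iff.2 (hh.congr hhf)

theorem eventually_subtype_snd_eq {X G : Type*} [TopologicalSpace X] [TopologicalSpace G]
    [DiscreteTopology G] {s : X × G → Prop} (p : Subtype s) :
    ∀ᶠ q in 𝓝 p, q.1.2 = p.1.2 :=
  ((IsLocallyConstant.iff_continuous _).2
    (continuous_snd.comp continuous_subtype_val)).eventually_eq p

theorem stmt_2_general {G : Type*} [Group G]
    [TopologicalSpace G] [DiscreteTopology G]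
    {X : Type*} [TopologicalSpace X] [CompactSpace X] [T2Space X]
    (P : Set G)
    (θ : G → X → X)
    (hθc : ∀ a ∈ P, Continuous (θ a))
    (hθi : ∀ a ∈ P, Function.Injective (θ a))
    (u : X → G → X)
    (hu : ∀ x : X, ∀ g ∈ Qset P θ x, ∀ a ∈ P, ∀ b ∈ P,
      g = a * b⁻¹ → θ a x = θ b (u x g)) :
    Continuous fun p : {q : X × G // q.2 ∈ Qset P θ q.1} => u p.1.1 p.1.2 := by
  refine continuous_iff_continuousAt.2 fun p => ?_
  obtain ⟨a, ha, b, hb, -, hg, -⟩ := p.2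
  have hθb : IsInducing (θ b) := ((hθc b hb).isClosedEmbedding (hθi b hb)).isInducing
  have hθa : Continuous fun q : {q : X × G // q.2 ∈ Qset P θ q.1} => θ a q.1.1 :=
    (hθc a ha).comp (continuous_fst.comp continuous_subtype_val)
  refine hθb.continuousAt_of_eventuallyEq hθa.continuousAt ?_
  filter_upwards [eventually_subtype_snd_eq p] with q hq
  exact hu _ _ q.2 a ha b hb (hq ▸ hg)

/-- the map `u : X ⋊ P → X`, `(x, g) ↦ u(x, g)`, is continuous, where the
transformation groupoid `X ⋊ P = {(x, g) : g ∈ Q_x}` carries the subspace topology from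
`X × G` with `G` discrete. -/
theorem stmt_2 {G : Type*} [Group G] [Countable G]
    [TopologicalSpace G] [DiscreteTopology G]
    {X : Type*} [TopologicalSpace X] [CompactSpace X] [T2Space X]
    [SecondCountableTopology X]
    (P : Set G) (hP1 : (1 : G) ∈ P) (hPmul : ∀ a ∈ P, ∀ b ∈ P, a * b ∈ P)
    (hPG : ∀ g : G, ∃ a ∈ P, ∃ b ∈ P, g = a * b⁻¹)
    (θ : G → X → X)
    (hθc : ∀ a ∈ P, Continuous (θ a))
    (hθi : ∀ a ∈ P, Function.Injective (θ a))
    (hθ1 : θ 1 = id)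
    (hθm : ∀ a ∈ P, ∀ b ∈ P, ∀ x : X, θ a (θ b x) = θ (b * a) x)
    (u : X → G → X)
    (hu : ∀ x : X, ∀ g ∈ Qset P θ x, ∀ a ∈ P, ∀ b ∈ P,
      g = a * b⁻¹ → θ a x = θ b (u x g)) :
    Continuous fun p : {q : X × G // q.2 ∈ Qset P θ q.1} => u p.1.1 p.1.2 :=
  stmt_2_general P θ hθc hθi u hu
end

section
/- The following are equivalent: (i) θ_a(X) is open in X for every a ∈ P; (ii) the range map r : X ⋊ P → X, r(x, g) = x, and the source map s : X ⋊ P → X, s(x, g) = u(x, g), are both local homeomorphisms (i.e., the groupoid X ⋊ P is étale over its unit space X). -/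
open Set Topology

section

variable {G X : Type*} [Group G] {P : Set G} {θ : G → X → X}

def IsSourceMap (P : Set G) (θ : G → X → X) (u : X → G → X) : Prop :=
  ∀ x : X, ∀ g ∈ Qset P θ x, ∀ a ∈ P, ∀ b ∈ P, g = a * b⁻¹ → θ a x = θ b (u x g)

theorem inv_mem_Qset_iff {u : X → G → X} (hu : IsSourceMap P θ u) (hP1 : (1 : G) ∈ P)
    (hθ1 : θ 1 = id) {a : G} (ha : a ∈ P) {x : X} :
    a⁻¹ ∈ Qset P θ x ↔ x ∈ range (θ a) := by
  constructor
  · intro hx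
    have := hu x a⁻¹ hx 1 hP1 a ha (one_mul _).symm
    rw [hθ1] at this
    exact ⟨u x a⁻¹, this.symm⟩
  · rintro ⟨y, rfl⟩
    exact ⟨1, hP1, a, ha, y, (one_mul _).symm, by rw [hθ1]; rfl⟩

theorem isOpen_setOf_mem_Qset [TopologicalSpace X] (hθc : ∀ a ∈ P, Continuous (θ a))
    (hopen : ∀ a ∈ P, IsOpen (range (θ a))) (g : G) :
    IsOpen {x : X | g ∈ Qset P θ x} := by
  rw [isOpen_iff_mem_nhds]
  rintro x ⟨a, ha, b, hb, y, hg, hxy⟩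
  have hpre : IsOpen (θ a ⁻¹' range (θ b)) := (hopen b hb).preimage (hθc a ha)
  filter_upwards [hpre.mem_nhds ⟨y, hxy.symm⟩] with x' ⟨y', hy'⟩
  exact ⟨a, ha, b, hb, y', hg, hy'.symm⟩

abbrev TransformationGroupoid (P : Set G) (θ : G → X → X) : Type _ :=
  {q : X × G // q.2 ∈ Qset P θ q.1}

namespace TransformationGroupoid

variable (P θ) in
def slice (g : G) : Set (TransformationGroupoid P θ) := {q | q.1.2 = g}

theorem image_fst_slice (g : G) :
    (fun p : TransformationGroupoid P θ => p.1.1) '' slice P θ g = {x | g ∈ Qset P θ x} := by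
  ext x
  constructor
  · rintro ⟨q, rfl, rfl⟩
    exact q.2
  · intro hx
    exact ⟨⟨(x, g), hx⟩, rfl, rfl⟩

variable [TopologicalSpace X] [TopologicalSpace G]

theorem isOpen_slice [DiscreteTopology G] (g : G) : IsOpen (slice P θ g) :=
  (isOpen_discrete {g}).preimage (continuous_snd.comp continuous_subtype_val)

variable (P θ) in
def sliceHomeomorph (g : G) : slice P θ g ≃ₜ {x : X | g ∈ Qset P θ x} where
  toFun q := ⟨q.1.1.1, by obtain ⟨⟨_, hq⟩, rfl⟩ := q; exact hq⟩
  invFun x := ⟨⟨(x.1, g), x.2⟩, rfl⟩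
  left_inv := by
    rintro ⟨⟨⟨x, g'⟩, hq⟩, rfl : g' = g⟩
    rfl
  right_inv _ := rfl
  continuous_toFun := by fun_prop
  continuous_invFun := by fun_prop

theorem isOpenEmbedding_domRestrict_fst {g : G} (hD : IsOpen {x : X | g ∈ Qset P θ x}) :
    IsOpenEmbedding ((slice P θ g).domRestrict fun p => p.1.1) :=
  hD.isOpenEmbedding_subtypeVal.comp (sliceHomeomorph P θ g).isOpenEmbedding

theorem isOpenEmbedding_domRestrict_source {u : X → G → X} (hu : IsSourceMap P θ u)
    {a b : G} (ha : a ∈ P) (hb : b ∈ P) (hθa : IsOpenEmbedding (θ a))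
    (hθb : IsOpenEmbedding (θ b)) (hD : IsOpen {x : X | a * b⁻¹ ∈ Qset P θ x}) :
    IsOpenEmbedding ((slice P θ (a * b⁻¹)).domRestrict fun p => u p.1.1 p.1.2) := by
  rw [← hθb.of_comp_iff]
  have hcomm : θ b ∘ (slice P θ (a * b⁻¹)).domRestrict (fun p => u p.1.1 p.1.2) =
      θ a ∘ (slice P θ (a * b⁻¹)).domRestrict fun p => p.1.1 := by
    funext ⟨q, hq⟩
    obtain ⟨⟨x, g⟩, hg⟩ := q
    rcases hq
    exact (hu x _ hg a ha b hb rfl).symm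
  rw [hcomm]
  exact hθa.comp (isOpenEmbedding_domRestrict_fst hD)

variable [DiscreteTopology G]

theorem isLocalHomeomorph_fst (hD : ∀ g : G, IsOpen {x : X | g ∈ Qset P θ x}) :
    IsLocalHomeomorph fun p : TransformationGroupoid P θ => p.1.1 :=
  isLocalHomeomorph_iff_isOpenEmbedding_restrict.2 fun p =>
    ⟨slice P θ p.1.2, (isOpen_slice _).mem_nhds rfl, isOpenEmbedding_domRestrict_fst (hD _)⟩

theorem isLocalHomeomorph_source {u : X → G → X} (hu : IsSourceMap P θ u)
    (hθ : ∀ a ∈ P, IsOpenEmbedding (θ a)) (hD : ∀ g : G, IsOpen {x : X | g ∈ Qset P θ x}) :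
    IsLocalHomeomorph fun p : TransformationGroupoid P θ => u p.1.1 p.1.2 := by
  refine isLocalHomeomorph_iff_isOpenEmbedding_restrict.2 fun p => ?_
  obtain ⟨a, ha, b, hb, -, hg, -⟩ := p.2
  refine ⟨slice P θ p.1.2, (isOpen_slice _).mem_nhds rfl, ?_⟩
  rw [hg]
  exact isOpenEmbedding_domRestrict_source hu ha hb (hθ a ha) (hθ b hb) (hD _)

end TransformationGroupoid

end

open TransformationGroupoid

theorem stmt_4_general {G : Type*} [Group G]
    [TopologicalSpace G] [DiscreteTopology G]
    {X : Type*} [TopologicalSpace X] [CompactSpace X] [T2Space X]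
    (P : Set G) (hP1 : (1 : G) ∈ P)
    (θ : G → X → X)
    (hθc : ∀ a ∈ P, Continuous (θ a))
    (hθi : ∀ a ∈ P, Function.Injective (θ a))
    (hθ1 : θ 1 = id)
    (u : X → G → X)
    (hu : ∀ x : X, ∀ g ∈ Qset P θ x, ∀ a ∈ P, ∀ b ∈ P,
      g = a * b⁻¹ → θ a x = θ b (u x g)) :
    (∀ a ∈ P, IsOpen (Set.range (θ a))) ↔
      (IsLocalHomeomorph (fun p : {q : X × G // q.2 ∈ Qset P θ q.1} => p.1.1) ∧
       IsLocalHomeomorph (fun p : {q : X × G // q.2 ∈ Qset P θ q.1} => u p.1.1 p.1.2)) := by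
  constructor
  · intro hopen
    have hθ : ∀ a ∈ P, IsOpenEmbedding (θ a) := fun a ha =>
      ⟨((hθc a ha).isClosedEmbedding (hθi a ha)).isEmbedding, hopen a ha⟩
    have hD := isOpen_setOf_mem_Qset hθc hopen
    exact ⟨isLocalHomeomorph_fst hD, isLocalHomeomorph_source hu hθ hD⟩
  · rintro ⟨hr, -⟩ a ha
    have hrange : range (θ a) = (fun p : TransformationGroupoid P θ => p.1.1) '' slice P θ a⁻¹ := by
      rw [image_fst_slice]
      exact Set.ext fun x => (inv_mem_Qset_iff hu hP1 hθ1 ha).symm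
    rw [hrange]
    exact hr.isOpenMap _ (isOpen_slice _)

/-- `θ_a(X)` is open for every `a ∈ P` if and only if the range map
`r(x, g) = x` and the source map `s(x, g) = u(x, g)` of the transformation groupoid
`X ⋊ P` are local homeomorphisms (i.e. `X ⋊ P` is étale over its unit space `X`). -/
theorem stmt_4 {G : Type*} [Group G] [Countable G]
    [TopologicalSpace G] [DiscreteTopology G]
    {X : Type*} [TopologicalSpace X] [CompactSpace X] [T2Space X]
    [SecondCountableTopology X]
    (P : Set G) (hP1 : (1 : G) ∈ P) (hPmul : ∀ a ∈ P, ∀ b ∈ P, a * b ∈ P)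
    (hPG : ∀ g : G, ∃ a ∈ P, ∃ b ∈ P, g = a * b⁻¹)
    (θ : G → X → X)
    (hθc : ∀ a ∈ P, Continuous (θ a))
    (hθi : ∀ a ∈ P, Function.Injective (θ a))
    (hθ1 : θ 1 = id)
    (hθm : ∀ a ∈ P, ∀ b ∈ P, ∀ x : X, θ a (θ b x) = θ (b * a) x)
    (u : X → G → X)
    (hu : ∀ x : X, ∀ g ∈ Qset P θ x, ∀ a ∈ P, ∀ b ∈ P,
      g = a * b⁻¹ → θ a x = θ b (u x g)) :
    (∀ a ∈ P, IsOpen (Set.range (θ a))) ↔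
      (IsLocalHomeomorph (fun p : {q : X × G // q.2 ∈ Qset P θ q.1} => p.1.1) ∧
       IsLocalHomeomorph (fun p : {q : X × G // q.2 ∈ Qset P θ q.1} => u p.1.1 p.1.2)) :=
  stmt_4_general P hP1 θ hθc hθi hθ1 u hu
end

section
/- The relation (x, g) ∼ (y, h) ⟺ there exist a, b ∈ P with gh⁻¹ = ab⁻¹ and θ_a(x) = θ_b(y) is an equivalence relation on X × G; the quotient space X̃ is locally compact Hausdorff; the quotient map π : X × G → X̃ is continuous, surjective and open; the set X' = {[x, e] : x ∈ X} is clopen in X̃, the map x ↦ [x, e] is injective, and X' is full for the action θ̃, i.e., for every [x, g] ∈ X̃ there exists h ∈ G with θ̃_h([x, g]) ∈ X'. -/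
/-!
Whether `(x, g) ∼ (y, h)` holds does not depend on the pair `a, b ∈ P` chosen with
`g * h⁻¹ = a * b⁻¹`: it is the equation `θ a x = θ b y` for any such pair. Hence the saturation
of a slice `W × {g}` meets the slice over `h` in `θ b ⁻¹' (θ a '' W)`. Each `θ a` is a closed
embedding (compact to Hausdorff) with open range, hence an open map, so saturations of open
(closed) slices are open (closed). This makes the quotient map open, separates points of `X̃`
through the Hausdorff space `X`, and shows that `X' = [X × {e}]` is clopen; the images of the
compact slices `X × {g}` are compact neighbourhoods.
-/

/-- The equivalence relation on `X × G`:
`(x, g) ∼ (y, h) ↔ ∃ a b ∈ P, g * h⁻¹ = a * b⁻¹ ∧ θ_a x = θ_b y`. -/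
def XGrel {G X : Type*} [Group G] (P : Set G) (θ : G → X → X) :
    X × G → X × G → Prop :=
  fun p q => ∃ a ∈ P, ∃ b ∈ P, p.2 * q.2⁻¹ = a * b⁻¹ ∧ θ a p.1 = θ b q.1

open Topology

theorem isOpen_of_forall_isOpen_slice {X G : Type*} [TopologicalSpace X] [TopologicalSpace G]
    [DiscreteTopology G] {S : Set (X × G)} (hS : ∀ g, IsOpen ((·, g) ⁻¹' S)) : IsOpen S := by
  refine isOpen_iff_forall_mem_open.mpr fun ⟨x, g⟩ hxg =>
    ⟨((·, g) ⁻¹' S) ×ˢ {g}, ?_, (hS g).prod (isOpen_discrete _), hxg, rfl⟩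
  rintro ⟨y, h⟩ ⟨hy, rfl⟩
  exact hy

theorem isClosed_of_forall_isClosed_slice {X G : Type*} [TopologicalSpace X]
    [TopologicalSpace G] [DiscreteTopology G] {S : Set (X × G)}
    (hS : ∀ g, IsClosed ((·, g) ⁻¹' S)) : IsClosed S :=
  isOpen_compl_iff.mp <| isOpen_of_forall_isOpen_slice fun g => (hS g).isOpen_compl

theorem Continuous.isOpenMap_of_injective_of_isOpen_range {X Y : Type*} [TopologicalSpace X]
    [TopologicalSpace Y] [CompactSpace X] [T2Space Y] {f : X → Y} (hf : Continuous f)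
    (hinj : Function.Injective f) (hopen : IsOpen (Set.range f)) : IsOpenMap f :=
  (IsOpenEmbedding.mk (hf.isClosedEmbedding hinj).toIsEmbedding hopen).isOpenMap

namespace XGrel

variable {G X : Type*} [Group G] {P : Set G} {θ : G → X → X}

theorem apply_eq_of_mul_inv_eq (hPG : ∀ g : G, ∃ a ∈ P, ∃ b ∈ P, g = a * b⁻¹)
    (hθi : ∀ a ∈ P, Function.Injective (θ a))
    (hθm : ∀ a ∈ P, ∀ b ∈ P, ∀ x : X, θ a (θ b x) = θ (b * a) x)
    {a b a' b' : G} (ha : a ∈ P) (hb : b ∈ P) (ha' : a' ∈ P) (hb' : b' ∈ P)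
    (hab : a * b⁻¹ = a' * b'⁻¹) {x y : X} (hxy : θ a x = θ b y) :
    θ a' x = θ b' y := by
  -- Writing `a'⁻¹ * a = s * t⁻¹`, both `θ s ∘ θ a'` and `θ s ∘ θ b'` factor through `θ t`.
  obtain ⟨s, hs, t, ht, hst⟩ := hPG (a'⁻¹ * a)
  have hb'b : b'⁻¹ * b = a'⁻¹ * a :=
    calc b'⁻¹ * b = a'⁻¹ * (a' * b'⁻¹) * b := by group
      _ = a'⁻¹ * a := by rw [← hab]; group
  have has : a' * s = a * t := by rw [← mul_inv_eq_iff_eq_mul, mul_assoc, ← hst]; group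
  have hbs : b' * s = b * t := by rw [← mul_inv_eq_iff_eq_mul, mul_assoc, ← hst, ← hb'b]; group
  refine hθi s hs ?_
  rw [hθm s hs a' ha', hθm s hs b' hb', has, hbs, ← hθm t ht a ha, ← hθm t ht b hb, hxy]

theorem mk_iff (hPG : ∀ g : G, ∃ a ∈ P, ∃ b ∈ P, g = a * b⁻¹)
    (hθi : ∀ a ∈ P, Function.Injective (θ a))
    (hθm : ∀ a ∈ P, ∀ b ∈ P, ∀ x : X, θ a (θ b x) = θ (b * a) x)
    {x y : X} {g h a b : G} (ha : a ∈ P) (hb : b ∈ P) (hab : g * h⁻¹ = a * b⁻¹) :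
    XGrel P θ (x, g) (y, h) ↔ θ a x = θ b y :=
  ⟨fun ⟨_, ha', _, hb', hab', hxy⟩ =>
    apply_eq_of_mul_inv_eq hPG hθi hθm ha' hb' ha hb (hab'.symm.trans hab) hxy,
    fun hxy => ⟨a, ha, b, hb, hab, hxy⟩⟩

theorem equivalence (hP1 : (1 : G) ∈ P) (hPmul : ∀ a ∈ P, ∀ b ∈ P, a * b ∈ P)
    (hPG : ∀ g : G, ∃ a ∈ P, ∃ b ∈ P, g = a * b⁻¹)
    (hθm : ∀ a ∈ P, ∀ b ∈ P, ∀ x : X, θ a (θ b x) = θ (b * a) x) :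
    Equivalence (XGrel P θ) where
  refl _ := ⟨1, hP1, 1, hP1, by group, rfl⟩
  symm := fun ⟨a, ha, b, hb, hab, hxy⟩ =>
    ⟨b, hb, a, ha, by rw [← inv_inj, mul_inv_rev, inv_inv, hab]; group, hxy.symm⟩
  trans := by
    rintro ⟨x, g⟩ ⟨y, h⟩ ⟨z, k⟩ ⟨a, ha, b, hb, hab, hxy⟩ ⟨c, hc, d, hd, hcd, hyz⟩
    obtain ⟨s, hs, t, ht, hst⟩ := hPG (b⁻¹ * c)
    have hbs : b * s = c * t := by
      rw [← mul_inv_eq_iff_eq_mul, mul_assoc, ← hst]; group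
    refine ⟨a * s, hPmul a ha s hs, d * t, hPmul d hd t ht, ?_, ?_⟩
    · calc g * k⁻¹ = (g * h⁻¹) * (h * k⁻¹) := by group
        _ = a * (b⁻¹ * c) * d⁻¹ := by rw [hab, hcd]; group
        _ = a * s * (d * t)⁻¹ := by rw [hst]; group
    · calc θ (a * s) x = θ s (θ b y) := by rw [← hxy, hθm s hs a ha]
        _ = θ t (θ c y) := by rw [hθm s hs b hb, hbs, hθm t ht c hc]
        _ = θ (d * t) z := by rw [hyz, hθm t ht d hd]

theorem slice_preimage_mk_image_slice (hr : Equivalence (XGrel P θ))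
    (hPG : ∀ g : G, ∃ a ∈ P, ∃ b ∈ P, g = a * b⁻¹)
    (hθi : ∀ a ∈ P, Function.Injective (θ a))
    (hθm : ∀ a ∈ P, ∀ b ∈ P, ∀ x : X, θ a (θ b x) = θ (b * a) x)
    {g h a b : G} (ha : a ∈ P) (hb : b ∈ P) (hab : g * h⁻¹ = a * b⁻¹) (W : Set X) :
    (·, h) ⁻¹' (Quot.mk (XGrel P θ) ⁻¹' (Quot.mk (XGrel P θ) '' (W ×ˢ {g}))) =
      θ b ⁻¹' (θ a '' W) := by
  ext y
  simp only [Set.mem_preimage, Set.mem_image, Set.mem_prod, Set.mem_singleton_iff,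
    Prod.exists, hr.quot_mk_eq_iff]
  constructor
  · rintro ⟨x, _, ⟨hx, rfl⟩, hxy⟩
    exact ⟨x, hx, (mk_iff hPG hθi hθm ha hb hab).mp hxy⟩
  · rintro ⟨x, hx, hxy⟩
    exact ⟨x, g, ⟨hx, rfl⟩, (mk_iff hPG hθi hθm ha hb hab).mpr hxy⟩

theorem injective_mk_one (hr : Equivalence (XGrel P θ)) (hP1 : (1 : G) ∈ P)
    (hPG : ∀ g : G, ∃ a ∈ P, ∃ b ∈ P, g = a * b⁻¹)
    (hθi : ∀ a ∈ P, Function.Injective (θ a))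
    (hθm : ∀ a ∈ P, ∀ b ∈ P, ∀ x : X, θ a (θ b x) = θ (b * a) x) :
    Function.Injective fun x : X => Quot.mk (XGrel P θ) (x, 1) := fun x y hxy =>
  hθi 1 hP1 <| (mk_iff hPG hθi hθm hP1 hP1 (by group)).mp ((hr.quot_mk_eq_iff _ _).mp hxy)

end XGrel

section Quotient

variable {G X : Type*} [Group G] [TopologicalSpace G] [DiscreteTopology G]
  [TopologicalSpace X] [CompactSpace X] [T2Space X] {P : Set G} {θ : G → X → X}

theorem isOpen_mk_image_slice (hr : Equivalence (XGrel P θ))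
    (hPG : ∀ g : G, ∃ a ∈ P, ∃ b ∈ P, g = a * b⁻¹)
    (hθc : ∀ a ∈ P, Continuous (θ a))
    (hθi : ∀ a ∈ P, Function.Injective (θ a))
    (hθm : ∀ a ∈ P, ∀ b ∈ P, ∀ x : X, θ a (θ b x) = θ (b * a) x)
    (hopen : ∀ a ∈ P, IsOpen (Set.range (θ a))) {W : Set X} (hW : IsOpen W) (g : G) :
    IsOpen (Quot.mk (XGrel P θ) '' (W ×ˢ {g})) := by
  rw [← isQuotientMap_quot_mk.isOpen_preimage]
  refine isOpen_of_forall_isOpen_slice fun h => ?_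
  obtain ⟨a, ha, b, hb, hab⟩ := hPG (g * h⁻¹)
  rw [XGrel.slice_preimage_mk_image_slice hr hPG hθi hθm ha hb hab]
  exact ((hθc a ha).isOpenMap_of_injective_of_isOpen_range (hθi a ha) (hopen a ha) W hW).preimage
    (hθc b hb)

theorem isClosed_mk_image_slice (hr : Equivalence (XGrel P θ))
    (hPG : ∀ g : G, ∃ a ∈ P, ∃ b ∈ P, g = a * b⁻¹)
    (hθc : ∀ a ∈ P, Continuous (θ a))
    (hθi : ∀ a ∈ P, Function.Injective (θ a))
    (hθm : ∀ a ∈ P, ∀ b ∈ P, ∀ x : X, θ a (θ b x) = θ (b * a) x)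
    {W : Set X} (hW : IsClosed W) (g : G) :
    IsClosed (Quot.mk (XGrel P θ) '' (W ×ˢ {g})) := by
  rw [← isQuotientMap_quot_mk.isClosed_preimage]
  refine isClosed_of_forall_isClosed_slice fun h => ?_
  obtain ⟨a, ha, b, hb, hab⟩ := hPG (g * h⁻¹)
  rw [XGrel.slice_preimage_mk_image_slice hr hPG hθi hθm ha hb hab]
  exact (hW.isCompact.image (hθc a ha)).isClosed.preimage (hθc b hb)

theorem isOpenMap_quot_mk (hr : Equivalence (XGrel P θ))
    (hPG : ∀ g : G, ∃ a ∈ P, ∃ b ∈ P, g = a * b⁻¹)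
    (hθc : ∀ a ∈ P, Continuous (θ a))
    (hθi : ∀ a ∈ P, Function.Injective (θ a))
    (hθm : ∀ a ∈ P, ∀ b ∈ P, ∀ x : X, θ a (θ b x) = θ (b * a) x)
    (hopen : ∀ a ∈ P, IsOpen (Set.range (θ a))) :
    IsOpenMap (Quot.mk (XGrel P θ)) := by
  intro U hU
  have hU_slices : U = ⋃ g, ((·, g) ⁻¹' U) ×ˢ {g} := by ext ⟨x, g⟩; simp
  rw [hU_slices, Set.image_iUnion]
  exact isOpen_iUnion fun g =>
    isOpen_mk_image_slice hr hPG hθc hθi hθm hopen (hU.preimage (by fun_prop)) g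

theorem t2Space_quot (hr : Equivalence (XGrel P θ))
    (hPG : ∀ g : G, ∃ a ∈ P, ∃ b ∈ P, g = a * b⁻¹)
    (hθc : ∀ a ∈ P, Continuous (θ a))
    (hθi : ∀ a ∈ P, Function.Injective (θ a))
    (hθm : ∀ a ∈ P, ∀ b ∈ P, ∀ x : X, θ a (θ b x) = θ (b * a) x)
    (hopen : ∀ a ∈ P, IsOpen (Set.range (θ a))) :
    T2Space (Quot (XGrel P θ)) := by
  refine ⟨Quot.ind fun ⟨x, g⟩ => Quot.ind fun ⟨y, h⟩ hne => ?_⟩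
  obtain ⟨a, ha, b, hb, hab⟩ := hPG (g * h⁻¹)
  have hθne : θ a x ≠ θ b y := fun he =>
    hne (Quot.sound ((XGrel.mk_iff hPG hθi hθm ha hb hab).mpr he))
  obtain ⟨W₁, W₂, hW₁, hW₂, hx, hy, hW⟩ := t2_separation hθne
  have hslice := XGrel.slice_preimage_mk_image_slice hr hPG hθi hθm ha hb hab (θ a ⁻¹' W₁)
  refine ⟨_, _, isOpen_mk_image_slice hr hPG hθc hθi hθm hopen (hW₁.preimage (hθc a ha)) g,
    isOpen_mk_image_slice hr hPG hθc hθi hθm hopen (hW₂.preimage (hθc b hb)) h,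
    ⟨(x, g), ⟨hx, rfl⟩, rfl⟩, ⟨(y, h), ⟨hy, rfl⟩, rfl⟩, Set.disjoint_left.mpr ?_⟩
  rintro _ hz₁ ⟨⟨y', h'⟩, ⟨hy', hh'⟩, rfl⟩
  rw [show h' = h from hh'] at hz₁
  have hy'₁ : y' ∈ (·, h) ⁻¹' (Quot.mk (XGrel P θ) ⁻¹'
      (Quot.mk (XGrel P θ) '' ((θ a ⁻¹' W₁) ×ˢ {g}))) := hz₁
  rw [hslice] at hy'₁
  exact Set.disjoint_left.mp hW (Set.image_preimage_subset _ _ hy'₁) hy'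

theorem weaklyLocallyCompactSpace_quot (hr : Equivalence (XGrel P θ))
    (hPG : ∀ g : G, ∃ a ∈ P, ∃ b ∈ P, g = a * b⁻¹)
    (hθc : ∀ a ∈ P, Continuous (θ a))
    (hθi : ∀ a ∈ P, Function.Injective (θ a))
    (hθm : ∀ a ∈ P, ∀ b ∈ P, ∀ x : X, θ a (θ b x) = θ (b * a) x)
    (hopen : ∀ a ∈ P, IsOpen (Set.range (θ a))) :
    WeaklyLocallyCompactSpace (Quot (XGrel P θ)) where
  exists_compact_mem_nhds := Quot.ind fun ⟨x, g⟩ =>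
    ⟨_, (isCompact_univ.prod isCompact_singleton).image continuous_quot_mk,
      (isOpen_mk_image_slice hr hPG hθc hθi hθm hopen isOpen_univ g).mem_nhds
        ⟨(x, g), ⟨trivial, rfl⟩, rfl⟩⟩

theorem isClopen_range_mk_one (hr : Equivalence (XGrel P θ))
    (hPG : ∀ g : G, ∃ a ∈ P, ∃ b ∈ P, g = a * b⁻¹)
    (hθc : ∀ a ∈ P, Continuous (θ a))
    (hθi : ∀ a ∈ P, Function.Injective (θ a))
    (hθm : ∀ a ∈ P, ∀ b ∈ P, ∀ x : X, θ a (θ b x) = θ (b * a) x)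
    (hopen : ∀ a ∈ P, IsOpen (Set.range (θ a))) :
    IsClopen (Set.range fun x : X => Quot.mk (XGrel P θ) (x, 1)) := by
  have hrange : (Set.range fun x : X => Quot.mk (XGrel P θ) (x, 1)) =
      Quot.mk (XGrel P θ) '' (Set.univ ×ˢ {1}) := by ext; simp
  rw [hrange]
  exact ⟨isClosed_mk_image_slice hr hPG hθc hθi hθm isClosed_univ 1,
    isOpen_mk_image_slice hr hPG hθc hθi hθm hopen isOpen_univ 1⟩

end Quotient

theorem stmt_5_general {G : Type*} [Group G]
    [TopologicalSpace G] [DiscreteTopology G]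
    {X : Type*} [TopologicalSpace X] [CompactSpace X] [T2Space X]
    (P : Set G) (hP1 : (1 : G) ∈ P) (hPmul : ∀ a ∈ P, ∀ b ∈ P, a * b ∈ P)
    (hPG : ∀ g : G, ∃ a ∈ P, ∃ b ∈ P, g = a * b⁻¹)
    (θ : G → X → X)
    (hθc : ∀ a ∈ P, Continuous (θ a))
    (hθi : ∀ a ∈ P, Function.Injective (θ a))
    (hθm : ∀ a ∈ P, ∀ b ∈ P, ∀ x : X, θ a (θ b x) = θ (b * a) x)
    (hopen : ∀ a ∈ P, IsOpen (Set.range (θ a))) :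
    Equivalence (XGrel P θ) ∧
    LocallyCompactSpace (Quot (XGrel P θ)) ∧
    T2Space (Quot (XGrel P θ)) ∧
    Continuous (Quot.mk (XGrel P θ)) ∧
    Function.Surjective (Quot.mk (XGrel P θ)) ∧
    IsOpenMap (Quot.mk (XGrel P θ)) ∧
    IsClopen (Set.range fun x : X => Quot.mk (XGrel P θ) (x, 1)) ∧
    Function.Injective (fun x : X => Quot.mk (XGrel P θ) (x, 1)) ∧
    (∀ (x : X) (g : G), ∃ h : G,
      Quot.mk (XGrel P θ) (x, g * h) ∈ Set.range fun x : X => Quot.mk (XGrel P θ) (x, 1)) := by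
  have hr := XGrel.equivalence hP1 hPmul hPG hθm
  have hT2 := t2Space_quot hr hPG hθc hθi hθm hopen
  have := weaklyLocallyCompactSpace_quot hr hPG hθc hθi hθm hopen
  refine ⟨hr, inferInstance, hT2, continuous_quot_mk, Quot.mk_surjective,
    isOpenMap_quot_mk hr hPG hθc hθi hθm hopen, isClopen_range_mk_one hr hPG hθc hθi hθm hopen,
    XGrel.injective_mk_one hr hP1 hPG hθi hθm, fun x g => ⟨g⁻¹, x, by rw [mul_inv_cancel]⟩⟩

/-- `∼` is an equivalence relation on `X × G`; the quotient `X̃` is locally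
compact Hausdorff; the quotient map is continuous, surjective and open; the set
`X' = {[x, e] : x ∈ X}` is clopen in `X̃`, `x ↦ [x, e]` is injective, and `X'` is full for
the action `θ̃_h [x, g] = [x, gh]` (every `θ̃`-orbit meets `X'`). -/
theorem stmt_5 {G : Type*} [Group G] [Countable G]
    [TopologicalSpace G] [DiscreteTopology G]
    {X : Type*} [TopologicalSpace X] [CompactSpace X] [T2Space X]
    [SecondCountableTopology X]
    (P : Set G) (hP1 : (1 : G) ∈ P) (hPmul : ∀ a ∈ P, ∀ b ∈ P, a * b ∈ P)
    (hPG : ∀ g : G, ∃ a ∈ P, ∃ b ∈ P, g = a * b⁻¹)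
    (θ : G → X → X)
    (hθc : ∀ a ∈ P, Continuous (θ a))
    (hθi : ∀ a ∈ P, Function.Injective (θ a))
    (hθ1 : θ 1 = id)
    (hθm : ∀ a ∈ P, ∀ b ∈ P, ∀ x : X, θ a (θ b x) = θ (b * a) x)
    (hopen : ∀ a ∈ P, IsOpen (Set.range (θ a))) :
    Equivalence (XGrel P θ) ∧
    LocallyCompactSpace (Quot (XGrel P θ)) ∧
    T2Space (Quot (XGrel P θ)) ∧
    Continuous (Quot.mk (XGrel P θ)) ∧
    Function.Surjective (Quot.mk (XGrel P θ)) ∧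
    IsOpenMap (Quot.mk (XGrel P θ)) ∧
    IsClopen (Set.range fun x : X => Quot.mk (XGrel P θ) (x, 1)) ∧
    Function.Injective (fun x : X => Quot.mk (XGrel P θ) (x, 1)) ∧
    (∀ (x : X) (g : G), ∃ h : G,
      Quot.mk (XGrel P θ) (x, g * h) ∈ Set.range fun x : X => Quot.mk (XGrel P θ) (x, 1)) :=
  stmt_5_general P hP1 hPmul hPG θ hθc hθi hθm hopen
end

section
/- The map Φ : X ⋊ P → X̃ × G, Φ(x, g) = ([x, e], g), is a homeomorphism from X ⋊ P onto the reduction (X̃ ⋊ G)|_{X'} = {(z, g) ∈ X̃ × G : z ∈ X' and θ̃_g(z) ∈ X'} (with the subspace topology from X̃ × G, G discrete); moreover θ̃_g([x, e]) = [u(x, g), e] for every (x, g) ∈ X ⋊ P, so Φ is an isomorphism of groupoids intertwining range and source maps and multiplication. -/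
/-- `X' = {[x, e] : x ∈ X} ⊆ X̃`. -/
def Xprime {G X : Type*} [Group G] (P : Set G) (θ : G → X → X) :
    Set (Quot (XGrel P θ)) :=
  Set.range fun x : X => Quot.mk (XGrel P θ) (x, 1)

/-- The reduction `(X̃ ⋊ G)|_{X'} = {(z, g) : z ∈ X' and θ̃_g(z) ∈ X'}`, where
`θ̃_g([x, k]) = [x, k * g]`. -/
def Reduction {G X : Type*} [Group G] (P : Set G) (θ : G → X → X) :
    Set (Quot (XGrel P θ) × G) :=
  {p | p.1 ∈ Xprime P θ ∧ ∀ (x : X) (k : G),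
    p.1 = Quot.mk (XGrel P θ) (x, k) → Quot.mk (XGrel P θ) (x, k * p.2) ∈ Xprime P θ}

/-!
Because `G = P P⁻¹`, any `b, c ∈ P` have a common right multiple `b p = c q` in `P`, which
makes `∼` an equivalence relation; then `[x, g] ∈ X'` holds exactly when `g ∈ Q_x`, so the
reduction is the image of `X ⋊ P` under `(x, g) ↦ ([x, e], g)`. The map `x ↦ [x, e]` is
injective and open: the preimage in `X × G` of the image of an open `U` is
`⋃ θ_a⁻¹(θ_b U) × {a b⁻¹}`, and every `θ_b`, a continuous injection of a compact space into a
Hausdorff one with open range, is an open embedding. Hence `Φ` is an embedding with image the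
reduction.
-/

open Topology

section TransformationGroupoid

variable {G X : Type*} [Group G] {P : Set G} {θ : G → X → X}

lemma exists_mul_eq_mul (hPG : ∀ g : G, ∃ a ∈ P, ∃ b ∈ P, g = a * b⁻¹) (b c : G) :
    ∃ p ∈ P, ∃ q ∈ P, b * p = c * q := by
  obtain ⟨p, hp, q, hq, h⟩ := hPG (b⁻¹ * c)
  refine ⟨p, hp, q, hq, ?_⟩
  rw [inv_mul_eq_iff_eq_mul] at h
  rw [h]
  group

lemma apply_mul_eq_apply_mul (hθm : ∀ a ∈ P, ∀ b ∈ P, ∀ x : X, θ a (θ b x) = θ (b * a) x)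
    {a b p : G} (ha : a ∈ P) (hb : b ∈ P) (hp : p ∈ P) {x y : X} (h : θ a x = θ b y) :
    θ (a * p) x = θ (b * p) y := by
  rw [← hθm p hp a ha, ← hθm p hp b hb, h]

lemma XGrel_equivalence (hP1 : (1 : G) ∈ P) (hPmul : ∀ a ∈ P, ∀ b ∈ P, a * b ∈ P)
    (hPG : ∀ g : G, ∃ a ∈ P, ∃ b ∈ P, g = a * b⁻¹)
    (hθm : ∀ a ∈ P, ∀ b ∈ P, ∀ x : X, θ a (θ b x) = θ (b * a) x) :
    Equivalence (XGrel P θ) where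
  refl _ := ⟨1, hP1, 1, hP1, by group, rfl⟩
  symm := by
    rintro p q ⟨a, ha, b, hb, hg, hx⟩
    exact ⟨b, hb, a, ha, by rw [← inv_inj, mul_inv_rev, inv_inv, hg]; group, hx.symm⟩
  trans := by
    rintro p q r ⟨a, ha, b, hb, hpq, hθpq⟩ ⟨c, hc, d, hd, hqr, hθqr⟩
    obtain ⟨p', hp', q', hq', hbc⟩ := exists_mul_eq_mul hPG b c
    refine ⟨a * p', hPmul a ha p' hp', d * q', hPmul d hd q' hq', ?_, ?_⟩
    · have hc : c = b * p' * q'⁻¹ := by rw [hbc]; group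
      calc p.2 * r.2⁻¹ = (p.2 * q.2⁻¹) * (q.2 * r.2⁻¹) := by group
        _ = (a * p') * (d * q')⁻¹ := by rw [hpq, hqr, hc]; group
    · calc θ (a * p') p.1 = θ (b * p') q.1 := apply_mul_eq_apply_mul hθm ha hb hp' hθpq
        _ = θ (c * q') q.1 := by rw [hbc]
        _ = θ (d * q') r.1 := apply_mul_eq_apply_mul hθm hc hd hq' hθqr

lemma XGrel_mul_right (k : G) {p q : X × G} (h : XGrel P θ p q) :
    XGrel P θ (p.1, p.2 * k) (q.1, q.2 * k) := by
  obtain ⟨a, ha, b, hb, hpq, hθpq⟩ := h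
  exact ⟨a, ha, b, hb, by rw [← hpq]; group, hθpq⟩

variable (P θ) in
/-- The right action `θ̃_k [x, g] = [x, g * k]` of `G` on `X̃`. -/
def rightAct (k : G) : Quot (XGrel P θ) → Quot (XGrel P θ) :=
  Quot.map (fun p => (p.1, p.2 * k)) fun _ _ => XGrel_mul_right k

variable (P θ) in
def mkOne (x : X) : Quot (XGrel P θ) :=
  Quot.mk _ (x, 1)

lemma mem_Reduction_iff {z : Quot (XGrel P θ) × G} :
    z ∈ Reduction P θ ↔ z.1 ∈ Xprime P θ ∧ rightAct P θ z.2 z.1 ∈ Xprime P θ := by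
  refine and_congr_right fun _ => ⟨fun h => ?_, ?_⟩
  · obtain ⟨⟨x, k⟩, hxk⟩ := Quot.exists_rep z.1
    rw [← hxk]
    exact h x k hxk.symm
  · rintro h x k hxk
    rwa [hxk] at h

lemma mk_mem_Xprime_iff (hrel : Equivalence (XGrel P θ)) {x : X} {g : G} :
    Quot.mk (XGrel P θ) (x, g) ∈ Xprime P θ ↔ g ∈ Qset P θ x := by
  constructor
  · rintro ⟨y, hy⟩
    obtain ⟨a, ha, b, hb, hg, hθab⟩ := (hrel.quot_mk_eq_iff _ _).1 hy.symm
    exact ⟨a, ha, b, hb, y, by simpa using hg, hθab⟩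
  · rintro ⟨a, ha, b, hb, y, hg, hθab⟩
    exact ⟨y, (Quot.sound ⟨a, ha, b, hb, by simpa using hg, hθab⟩).symm⟩

lemma mkOne_mem_Reduction_iff (hrel : Equivalence (XGrel P θ)) {x : X} {g : G} :
    (mkOne P θ x, g) ∈ Reduction P θ ↔ g ∈ Qset P θ x := by
  rw [mem_Reduction_iff, ← mk_mem_Xprime_iff hrel]
  simp only [mkOne, rightAct, Quot.map, one_mul]
  exact and_iff_right ⟨x, rfl⟩

lemma range_mkOne_prod_eq_Reduction (hrel : Equivalence (XGrel P θ)) :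
    Set.range (fun q : {q : X × G // q.2 ∈ Qset P θ q.1} => (mkOne P θ q.1.1, q.1.2)) =
      Reduction P θ := by
  ext ⟨z, g⟩
  constructor
  · rintro ⟨⟨⟨x, g⟩, hg⟩, hxg⟩
    rw [← hxg]
    exact (mkOne_mem_Reduction_iff hrel).2 hg
  · intro hzg
    obtain ⟨x, rfl⟩ := hzg.1
    exact ⟨⟨(x, g), (mkOne_mem_Reduction_iff hrel).1 hzg⟩, rfl⟩

lemma mk_eq_mkOne_u (u : X → G → X)
    (hu : ∀ x : X, ∀ g ∈ Qset P θ x, ∀ a ∈ P, ∀ b ∈ P, g = a * b⁻¹ → θ a x = θ b (u x g))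
    {x : X} {g : G} (hg : g ∈ Qset P θ x) :
    Quot.mk (XGrel P θ) (x, g) = mkOne P θ (u x g) := by
  obtain ⟨a, ha, b, hb, -, hgab, -⟩ := id hg
  exact Quot.sound ⟨a, ha, b, hb, by simpa using hgab, hu x g hg a ha b hb hgab⟩

lemma mkOne_injective (hrel : Equivalence (XGrel P θ))
    (hθi : ∀ a ∈ P, Function.Injective (θ a)) :
    Function.Injective (mkOne P θ) := by
  intro x y hxy
  obtain ⟨a, ha, b, hb, hab, hθab⟩ := (hrel.quot_mk_eq_iff _ _).1 hxy
  obtain rfl : a = b := mul_inv_eq_one.1 (by simpa using hab.symm)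
  exact hθi a ha hθab

lemma mk_preimage_image_mkOne (hrel : Equivalence (XGrel P θ)) (U : Set X) :
    Quot.mk (XGrel P θ) ⁻¹' (mkOne P θ '' U) =
      ⋃ a ∈ P, ⋃ b ∈ P, (θ a ⁻¹' (θ b '' U)) ×ˢ {a * b⁻¹} := by
  ext ⟨y, h⟩
  simp only [Set.mem_preimage, Set.mem_image, Set.mem_iUnion, Set.mem_prod,
    Set.mem_singleton_iff, mkOne]
  constructor
  · rintro ⟨x, hxU, hx⟩
    obtain ⟨a, ha, b, hb, hab, hθab⟩ := (hrel.quot_mk_eq_iff _ _).1 hx.symm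
    exact ⟨a, ha, b, hb, ⟨x, hxU, hθab.symm⟩, by simpa using hab⟩
  · rintro ⟨a, ha, b, hb, ⟨x, hxU, hθab⟩, hab⟩
    exact ⟨x, hxU, (Quot.sound ⟨a, ha, b, hb, by simpa using hab, hθab.symm⟩).symm⟩

section Embedding

variable [TopologicalSpace G] [DiscreteTopology G] [TopologicalSpace X]

lemma isOpenMap_mkOne [CompactSpace X] [T2Space X] (hrel : Equivalence (XGrel P θ))
    (hθc : ∀ a ∈ P, Continuous (θ a)) (hθi : ∀ a ∈ P, Function.Injective (θ a))
    (hopen : ∀ a ∈ P, IsOpen (Set.range (θ a))) :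
    IsOpenMap (mkOne P θ) := by
  intro U hU
  rw [← isQuotientMap_quot_mk.isOpen_preimage, mk_preimage_image_mkOne hrel]
  have hθU : ∀ b ∈ P, IsOpen (θ b '' U) := fun b hb =>
    (IsOpenEmbedding.mk ((hθc b hb).isClosedEmbedding (hθi b hb)).isEmbedding
      (hopen b hb)).isOpenMap U hU
  exact isOpen_biUnion fun a ha => isOpen_biUnion fun b hb =>
    ((hθU b hb).preimage (hθc a ha)).prod (isOpen_discrete _)

lemma isEmbedding_mkOne [CompactSpace X] [T2Space X] (hrel : Equivalence (XGrel P θ))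
    (hθc : ∀ a ∈ P, Continuous (θ a)) (hθi : ∀ a ∈ P, Function.Injective (θ a))
    (hopen : ∀ a ∈ P, IsOpen (Set.range (θ a))) :
    IsEmbedding (mkOne P θ) :=
  (IsOpenEmbedding.of_continuous_injective_isOpenMap
    (continuous_quot_mk.comp (.prodMk_left 1)) (mkOne_injective hrel hθi)
    (isOpenMap_mkOne hrel hθc hθi hopen)).isEmbedding

end Embedding

end TransformationGroupoid

theorem stmt_6_general {G : Type*} [Group G]
    [TopologicalSpace G] [DiscreteTopology G]
    {X : Type*} [TopologicalSpace X] [CompactSpace X] [T2Space X]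
    (P : Set G) (hP1 : (1 : G) ∈ P) (hPmul : ∀ a ∈ P, ∀ b ∈ P, a * b ∈ P)
    (hPG : ∀ g : G, ∃ a ∈ P, ∃ b ∈ P, g = a * b⁻¹)
    (θ : G → X → X)
    (hθc : ∀ a ∈ P, Continuous (θ a))
    (hθi : ∀ a ∈ P, Function.Injective (θ a))
    (hθm : ∀ a ∈ P, ∀ b ∈ P, ∀ x : X, θ a (θ b x) = θ (b * a) x)
    (hopen : ∀ a ∈ P, IsOpen (Set.range (θ a)))
    (u : X → G → X)
    (hu : ∀ x : X, ∀ g ∈ Qset P θ x, ∀ a ∈ P, ∀ b ∈ P,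
      g = a * b⁻¹ → θ a x = θ b (u x g)) :
    (∀ x : X, ∀ g ∈ Qset P θ x,
      Quot.mk (XGrel P θ) (x, g) = Quot.mk (XGrel P θ) (u x g, 1)) ∧
    (∀ p : {q : X × G // q.2 ∈ Qset P θ q.1},
      ((Quot.mk (XGrel P θ) (p.1.1, 1), p.1.2) : Quot (XGrel P θ) × G) ∈ Reduction P θ) ∧
    (∃ Φ : {q : X × G // q.2 ∈ Qset P θ q.1} ≃ₜ Reduction P θ,
      ∀ p : {q : X × G // q.2 ∈ Qset P θ q.1},
        (Φ p : Quot (XGrel P θ) × G) = (Quot.mk (XGrel P θ) (p.1.1, 1), p.1.2)) := by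
  have hrel := XGrel_equivalence hP1 hPmul hPG hθm
  have hΦ : IsEmbedding fun q : {q : X × G // q.2 ∈ Qset P θ q.1} => (mkOne P θ q.1.1, q.1.2) :=
    ((isEmbedding_mkOne hrel hθc hθi hopen).prodMap .id).comp .subtypeVal
  refine ⟨fun x g hg => mk_eq_mkOne_u u hu hg,
    fun p => (mkOne_mem_Reduction_iff hrel).2 p.2, ?_⟩
  exact ⟨hΦ.toHomeomorph.trans (.setCongr (range_mkOne_prod_eq_Reduction hrel)), fun _ => rfl⟩

/-- `θ̃_g([x, e]) = [u(x, g), e]` for `(x, g) ∈ X ⋊ P`, the map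
`Φ(x, g) = ([x, e], g)` takes values in the reduction `(X̃ ⋊ G)|_{X'}`, and it is a
homeomorphism of `X ⋊ P` onto that reduction (hence an isomorphism of groupoids,
intertwining range, source and multiplication). -/
theorem stmt_6 {G : Type*} [Group G] [Countable G]
    [TopologicalSpace G] [DiscreteTopology G]
    {X : Type*} [TopologicalSpace X] [CompactSpace X] [T2Space X]
    [SecondCountableTopology X]
    (P : Set G) (hP1 : (1 : G) ∈ P) (hPmul : ∀ a ∈ P, ∀ b ∈ P, a * b ∈ P)
    (hPG : ∀ g : G, ∃ a ∈ P, ∃ b ∈ P, g = a * b⁻¹)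
    (θ : G → X → X)
    (hθc : ∀ a ∈ P, Continuous (θ a))
    (hθi : ∀ a ∈ P, Function.Injective (θ a))
    (hθ1 : θ 1 = id)
    (hθm : ∀ a ∈ P, ∀ b ∈ P, ∀ x : X, θ a (θ b x) = θ (b * a) x)
    (hopen : ∀ a ∈ P, IsOpen (Set.range (θ a)))
    (u : X → G → X)
    (hu : ∀ x : X, ∀ g ∈ Qset P θ x, ∀ a ∈ P, ∀ b ∈ P,
      g = a * b⁻¹ → θ a x = θ b (u x g)) :
    (∀ x : X, ∀ g ∈ Qset P θ x,
      Quot.mk (XGrel P θ) (x, g) = Quot.mk (XGrel P θ) (u x g, 1)) ∧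
    (∀ p : {q : X × G // q.2 ∈ Qset P θ q.1},
      ((Quot.mk (XGrel P θ) (p.1.1, 1), p.1.2) : Quot (XGrel P θ) × G) ∈ Reduction P θ) ∧
    (∃ Φ : {q : X × G // q.2 ∈ Qset P θ q.1} ≃ₜ Reduction P θ,
      ∀ p : {q : X × G // q.2 ∈ Qset P θ q.1},
        (Φ p : Quot (XGrel P θ) × G) = (Quot.mk (XGrel P θ) (p.1.1, 1), p.1.2)) :=
  stmt_6_general P hP1 hPmul hPG θ hθc hθi hθm hopen u hu
end

section
/- Assume each θ_m (m ∈ P) is a homeomorphism of X, and let θ̂ be the right G-action on X determined by θ̂_{mn⁻¹} = θ_n⁻¹ ∘ θ_m for m, n ∈ P. Then the map φ : X → X̃, φ(x) = [x, e], is a homeomorphism of X onto X̃ satisfying φ(θ̂_g(x)) = θ̃_g(φ(x)) for all x ∈ X and g ∈ G; that is, the actions G ↷_θ̂ X and G ↷_θ̃ X̃ are conjugate. -/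
/-!
Since `θ_n ∘ θ̂_g = θ_m` whenever `g = m n⁻¹`, the map `[x, g] ↦ θ̂_g x` is well defined on `X̃`:
given `(x, g) ∼ (y, h)`, one writes `g` and `h` over a common denominator in `P`, using the Ore
condition `b P ∩ p P ≠ ∅` that `G = P P⁻¹` provides. It inverts `φ`, because
`(θ̂_g x, e) ∼ (x, g)`. It is continuous because `G` is discrete and each `θ̂_g` is continuous,
`θ_n` being a closed embedding of the compact space `X` into the Hausdorff space `X`.
-/

section

variable {G X : Type*} [Group G] {P : Set G} {θ θhat : G → X → X}

theorem exists_mul_eq_mul_of_forall_eq_mul_inv (hPG : ∀ g : G, ∃ a ∈ P, ∃ b ∈ P, g = a * b⁻¹)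
    (b p : G) : ∃ u ∈ P, ∃ v ∈ P, b * u = p * v := by
  obtain ⟨u, hu, v, hv, huv⟩ := hPG (b⁻¹ * p)
  refine ⟨u, hu, v, hv, ?_⟩
  rw [eq_mul_inv_iff_mul_eq] at huv
  rw [← huv]
  group

theorem hat_eq_of_xGrel (hPmul : ∀ a ∈ P, ∀ b ∈ P, a * b ∈ P)
    (hPG : ∀ g : G, ∃ a ∈ P, ∃ b ∈ P, g = a * b⁻¹)
    (hθi : ∀ a ∈ P, Function.Injective (θ a))
    (hθm : ∀ a ∈ P, ∀ b ∈ P, ∀ x : X, θ a (θ b x) = θ (b * a) x)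
    (hθhat : ∀ g : G, ∀ m ∈ P, ∀ n ∈ P, g = m * n⁻¹ → ∀ x : X, θ n (θhat g x) = θ m x)
    {x y : X} {g h : G} (hr : XGrel P θ (x, g) (y, h)) : θhat g x = θhat h y := by
  obtain ⟨p, hp, q, hq, rfl⟩ := hPG h
  obtain ⟨a, ha, b, hb, hgh : g * (p * q⁻¹)⁻¹ = a * b⁻¹, hab : θ a x = θ b y⟩ := hr
  obtain ⟨u, hu, v, hv, hbu⟩ := exists_mul_eq_mul_of_forall_eq_mul_inv hPG b p
  have hbp : b⁻¹ * p = u * v⁻¹ := by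
    rw [eq_mul_inv_iff_mul_eq, mul_assoc, ← hbu, inv_mul_cancel_left]
  have hg : g = a * u * (q * v)⁻¹ := by
    rw [mul_inv_eq_iff_eq_mul] at hgh
    calc g = a * (b⁻¹ * p) * q⁻¹ := by rw [hgh]; group
      _ = a * u * (q * v)⁻¹ := by rw [hbp]; group
  apply hθi (q * v) (hPmul q hq v hv)
  rw [hθhat g (a * u) (hPmul a ha u hu) (q * v) (hPmul q hq v hv) hg,
    hθhat (p * q⁻¹) (p * v) (hPmul p hp v hv) (q * v) (hPmul q hq v hv) (by group),
    ← hθm u hu a ha, hab, hθm u hu b hb, hbu]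

theorem hat_one_apply (hPG : ∀ g : G, ∃ a ∈ P, ∃ b ∈ P, g = a * b⁻¹)
    (hθi : ∀ a ∈ P, Function.Injective (θ a))
    (hθhat : ∀ g : G, ∀ m ∈ P, ∀ n ∈ P, g = m * n⁻¹ → ∀ x : X, θ n (θhat g x) = θ m x)
    (x : X) : θhat 1 x = x := by
  obtain ⟨m, hm, -⟩ := hPG 1
  exact hθi m hm (hθhat 1 m hm m hm (mul_inv_cancel m).symm x)

theorem xGrel_hat_one (hPG : ∀ g : G, ∃ a ∈ P, ∃ b ∈ P, g = a * b⁻¹)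
    (hθhat : ∀ g : G, ∀ m ∈ P, ∀ n ∈ P, g = m * n⁻¹ → ∀ x : X, θ n (θhat g x) = θ m x)
    (x : X) (g : G) : XGrel P θ (θhat g x, 1) (x, g) := by
  obtain ⟨m, hm, n, hn, hg⟩ := hPG g
  exact ⟨n, hn, m, hm, by simp [hg], hθhat g m hm n hn hg x⟩

theorem continuous_hat [TopologicalSpace X] [CompactSpace X] [T2Space X]
    (hPG : ∀ g : G, ∃ a ∈ P, ∃ b ∈ P, g = a * b⁻¹)
    (hθc : ∀ a ∈ P, Continuous (θ a))
    (hθi : ∀ a ∈ P, Function.Injective (θ a))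
    (hθhat : ∀ g : G, ∀ m ∈ P, ∀ n ∈ P, g = m * n⁻¹ → ∀ x : X, θ n (θhat g x) = θ m x)
    (g : G) : Continuous (θhat g) := by
  obtain ⟨m, hm, n, hn, hg⟩ := hPG g
  rw [((hθc n hn).isClosedEmbedding (hθi n hn)).continuous_iff]
  exact (hθc m hm).congr fun x => (hθhat g m hm n hn hg x).symm

end

theorem stmt_8_general {G : Type*} [Group G]
    [TopologicalSpace G] [DiscreteTopology G]
    {X : Type*} [TopologicalSpace X] [CompactSpace X] [T2Space X]
    (P : Set G) (hPmul : ∀ a ∈ P, ∀ b ∈ P, a * b ∈ P)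
    (hPG : ∀ g : G, ∃ a ∈ P, ∃ b ∈ P, g = a * b⁻¹)
    (θ : G → X → X)
    (hθc : ∀ a ∈ P, Continuous (θ a))
    (hθi : ∀ a ∈ P, Function.Injective (θ a))
    (hθm : ∀ a ∈ P, ∀ b ∈ P, ∀ x : X, θ a (θ b x) = θ (b * a) x)
    (θhat : G → X → X)
    (hθhat : ∀ g : G, ∀ m ∈ P, ∀ n ∈ P, g = m * n⁻¹ → ∀ x : X, θ n (θhat g x) = θ m x) :
    ∃ φ : X ≃ₜ Quot (XGrel P θ),
      (∀ x : X, φ x = Quot.mk (XGrel P θ) (x, 1)) ∧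
      (∀ (x : X) (g : G), φ (θhat g x) = Quot.mk (XGrel P θ) (x, g)) := by
  have hwd : ∀ p q : X × G, XGrel P θ p q → θhat p.2 p.1 = θhat q.2 q.1 :=
    fun _ _ => hat_eq_of_xGrel hPmul hPG hθi hθm hθhat
  let φ : X ≃ₜ Quot (XGrel P θ) :=
    { toFun := fun x => Quot.mk _ (x, 1)
      invFun := Quot.lift (fun p => θhat p.2 p.1) hwd
      left_inv := hat_one_apply hPG hθi hθhat
      right_inv := Quot.ind fun p => Quot.sound (xGrel_hat_one hPG hθhat p.1 p.2)
      continuous_toFun := by fun_prop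
      continuous_invFun := continuous_quot_lift hwd <| continuous_prod_of_discrete_right.2
        fun g => continuous_hat hPG hθc hθi hθhat g }
  exact ⟨φ, fun _ => rfl, fun x g => Quot.sound (xGrel_hat_one hPG hθhat x g)⟩

/-- if every `θ_m` (`m ∈ P`) is a homeomorphism of `X`, and `θ̂` is the right
`G`-action on `X` determined by `θ̂_{mn⁻¹} = θ_n⁻¹ ∘ θ_m`, then `φ(x) = [x, e]` is a
homeomorphism `X ≃ₜ X̃` intertwining `θ̂` with `θ̃` (where `θ̃_g [x, k] = [x, k * g]`,
so `φ(θ̂_g(x)) = θ̃_g(φ(x)) = [x, g]`): the actions `G ↷ X` and `G ↷ X̃` are conjugate. -/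
theorem stmt_8 {G : Type*} [Group G] [Countable G]
    [TopologicalSpace G] [DiscreteTopology G]
    {X : Type*} [TopologicalSpace X] [CompactSpace X] [T2Space X]
    [SecondCountableTopology X]
    (P : Set G) (hP1 : (1 : G) ∈ P) (hPmul : ∀ a ∈ P, ∀ b ∈ P, a * b ∈ P)
    (hPG : ∀ g : G, ∃ a ∈ P, ∃ b ∈ P, g = a * b⁻¹)
    (θ : G → X → X)
    (hθc : ∀ a ∈ P, Continuous (θ a))
    (hθi : ∀ a ∈ P, Function.Injective (θ a))
    (hθ1 : θ 1 = id)
    (hθm : ∀ a ∈ P, ∀ b ∈ P, ∀ x : X, θ a (θ b x) = θ (b * a) x)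
    (hθsurj : ∀ m ∈ P, Function.Surjective (θ m))
    (θhat : G → X → X)
    (hθhat : ∀ g : G, ∀ m ∈ P, ∀ n ∈ P, g = m * n⁻¹ → ∀ x : X, θ n (θhat g x) = θ m x) :
    ∃ φ : X ≃ₜ Quot (XGrel P θ),
      (∀ x : X, φ x = Quot.mk (XGrel P θ) (x, 1)) ∧
      (∀ (x : X) (g : G), φ (θhat g x) = Quot.mk (XGrel P θ) (x, g)) :=
  stmt_8_general P hPmul hPG θ hθc hθi hθm θhat hθhat
end

section
/- Suppose the actions θ and ρ are conjugate via a homeomorphism φ : X → Y and a semigroup isomorphism α : P → S. Then: (a) the map β : G → H given by β(ab⁻¹) = α(a)α(b)⁻¹ for a, b ∈ P is a well-defined group isomorphism (i.e., if ab⁻¹ = cd⁻¹ with a, b, c, d ∈ P then α(a)α(b)⁻¹ = α(c)α(d)⁻¹, and β is a bijective group homomorphism); (b) for every (x, g) ∈ X ⋊ P one has β(g) ∈ Q_{φ(x)} and φ(u(x, g)) = u(φ(x), β(g)), and for every (y, h) ∈ Y ⋊ S one has β⁻¹(h) ∈ Q_{φ⁻¹(y)} and φ⁻¹(u(y, h))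 = u(φ⁻¹(y), β⁻¹(h)). Consequently θ and ρ are continuously orbit equivalent, with a(x, g) = β(g) and b(y, h) = β⁻¹(h). -/
open Function Set

section FractionGroup

variable {G H : Type*} [Group G] [Group H] {P : Set G} {S : Set H} {α β : G → H}

theorem inv_mul_map_eq_of_inv_mul_eq (hαmul : ∀ a ∈ P, ∀ b ∈ P, α (a * b) = α a * α b)
    {b c p q : G} (hb : b ∈ P) (hc : c ∈ P) (hp : p ∈ P) (hq : q ∈ P)
    (h : b⁻¹ * c = p * q⁻¹) : (α b)⁻¹ * α c = α p * (α q)⁻¹ := by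
  have hcq : c * q = b * p := by
    calc c * q = b * (b⁻¹ * c) * q := by group
      _ = b * p := by rw [h]; group
  have hαcq : α c * α q = α b * α p := by rw [← hαmul c hc q hq, ← hαmul b hb p hp, hcq]
  rw [inv_mul_eq_iff_eq_mul, ← mul_assoc, eq_mul_inv_iff_mul_eq, hαcq]

theorem mul_inv_map_eq_of_mul_inv_eq (hPG : ∀ g : G, ∃ a ∈ P, ∃ b ∈ P, g = a * b⁻¹)
    (hαmul : ∀ a ∈ P, ∀ b ∈ P, α (a * b) = α a * α b) {a b c d : G} (ha : a ∈ P) (hb : b ∈ P)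
    (hc : c ∈ P) (hd : d ∈ P) (h : a * b⁻¹ = c * d⁻¹) : α a * (α b)⁻¹ = α c * (α d)⁻¹ := by
  obtain ⟨p, hp, q, hq, hpq⟩ := hPG (c⁻¹ * a)
  have hdb : d⁻¹ * b = c⁻¹ * a := by
    calc d⁻¹ * b = c⁻¹ * (c * d⁻¹) * b := by group
      _ = c⁻¹ * a := by rw [← h]; group
  have hαca : (α c)⁻¹ * α a = (α d)⁻¹ * α b := by
    rw [inv_mul_map_eq_of_inv_mul_eq hαmul hc ha hp hq hpq,
      inv_mul_map_eq_of_inv_mul_eq hαmul hd hb hp hq (hdb.trans hpq)]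
  calc α a * (α b)⁻¹ = α c * ((α c)⁻¹ * α a) * (α b)⁻¹ := by group
    _ = α c * (α d)⁻¹ := by rw [hαca]; group

theorem map_mul_of_map_mul_inv (hPmul : ∀ a ∈ P, ∀ b ∈ P, a * b ∈ P)
    (hPG : ∀ g : G, ∃ a ∈ P, ∃ b ∈ P, g = a * b⁻¹)
    (hαmul : ∀ a ∈ P, ∀ b ∈ P, α (a * b) = α a * α b)
    (hβ : ∀ a ∈ P, ∀ b ∈ P, β (a * b⁻¹) = α a * (α b)⁻¹) (g g' : G) :
    β (g * g') = β g * β g' := by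
  obtain ⟨a, ha, b, hb, rfl⟩ := hPG g
  obtain ⟨c, hc, d, hd, rfl⟩ := hPG g'
  obtain ⟨p, hp, q, hq, hpq⟩ := hPG (b⁻¹ * c)
  have hgg' : a * b⁻¹ * (c * d⁻¹) = (a * p) * (d * q)⁻¹ := by
    calc a * b⁻¹ * (c * d⁻¹) = a * (b⁻¹ * c) * d⁻¹ := by group
      _ = (a * p) * (d * q)⁻¹ := by rw [hpq]; group
  rw [hgg', hβ _ (hPmul a ha p hp) _ (hPmul d hd q hq), hβ a ha b hb, hβ c hc d hd,
    hαmul a ha p hp, hαmul d hd q hq]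
  calc α a * α p * (α d * α q)⁻¹ = α a * (α p * (α q)⁻¹) * (α d)⁻¹ := by group
    _ = α a * (α b)⁻¹ * (α c * (α d)⁻¹) := by
      rw [← inv_mul_map_eq_of_inv_mul_eq hαmul hb hc hp hq hpq]; group

theorem injective_of_map_mul_inv (hβmul : ∀ g g' : G, β (g * g') = β g * β g')
    (hPG : ∀ g : G, ∃ a ∈ P, ∃ b ∈ P, g = a * b⁻¹) (hα : InjOn α P)
    (hβ : ∀ a ∈ P, ∀ b ∈ P, β (a * b⁻¹) = α a * (α b)⁻¹) : Injective β := by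
  refine (injective_iff_map_eq_one (MonoidHom.mk' β hβmul)).mpr fun g hg => ?_
  obtain ⟨a, ha, b, hb, rfl⟩ := hPG g
  have hab : α a = α b := mul_inv_eq_one.mp ((hβ a ha b hb).symm.trans hg)
  rw [hα ha hb hab, mul_inv_cancel]

theorem surjective_of_map_mul_inv (hSH : ∀ h : H, ∃ a ∈ S, ∃ b ∈ S, h = a * b⁻¹)
    (hα : SurjOn α P S) (hβ : ∀ a ∈ P, ∀ b ∈ P, β (a * b⁻¹) = α a * (α b)⁻¹) :
    Surjective β := by
  intro h
  obtain ⟨s, hs, t, ht, rfl⟩ := hSH h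
  obtain ⟨a, ha, rfl⟩ := hα hs
  obtain ⟨b, hb, rfl⟩ := hα ht
  exact ⟨a * b⁻¹, hβ a ha b hb⟩

theorem MulEquiv.symm_mul_inv_eq_invFunOn (e : G ≃* H) (hα : BijOn α P S)
    (he : ∀ a ∈ P, ∀ b ∈ P, e (a * b⁻¹) = α a * (α b)⁻¹) {s t : H} (hs : s ∈ S) (ht : t ∈ S) :
    e.symm (s * t⁻¹) = invFunOn α P s * (invFunOn α P t)⁻¹ := by
  have hinv := hα.invOn_invFunOn
  rw [e.symm_apply_eq, he _ (hα.surjOn.mapsTo_invFunOn hs) _ (hα.surjOn.mapsTo_invFunOn ht),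
    hinv.2 hs, hinv.2 ht]

end FractionGroup

theorem Equiv.symm_conj_invFunOn {G H X Y : Type*} [Nonempty G] {P : Set G} {S : Set H}
    {θ : G → X → X} {ρ : H → Y → Y} {α : G → H} (φ : X ≃ Y) (hα : BijOn α P S)
    (hconj : ∀ m ∈ P, ∀ x : X, φ (θ m x) = ρ (α m) (φ x)) :
    ∀ s ∈ S, ∀ y : Y, φ.symm (ρ s y) = θ (invFunOn α P s) (φ.symm y) := by
  intro s hs y
  rw [φ.symm_apply_eq, hconj _ (hα.surjOn.mapsTo_invFunOn hs), hα.invOn_invFunOn.2 hs,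
    φ.apply_symm_apply]

section Conjugacy

variable {G H X Y : Type*} [Group G] [Group H] {P : Set G} {S : Set H}
  {θ : G → X → X} {ρ : H → Y → Y} {α β : G → H}

theorem map_mem_Qset {φ : X → Y} (hα : MapsTo α P S)
    (hconj : ∀ m ∈ P, ∀ x : X, φ (θ m x) = ρ (α m) (φ x))
    (hβ : ∀ a ∈ P, ∀ b ∈ P, β (a * b⁻¹) = α a * (α b)⁻¹) {x : X} {g : G}
    (hg : g ∈ Qset P θ x) : β g ∈ Qset S ρ (φ x) := by
  obtain ⟨a, ha, b, hb, y, rfl, hxy⟩ := hg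
  exact ⟨α a, hα ha, α b, hα hb, φ y, hβ a ha b hb, by rw [← hconj a ha, ← hconj b hb, hxy]⟩

theorem map_u_eq_v {φ : X → Y} (hα : MapsTo α P S)
    (hconj : ∀ m ∈ P, ∀ x : X, φ (θ m x) = ρ (α m) (φ x))
    (hβ : ∀ a ∈ P, ∀ b ∈ P, β (a * b⁻¹) = α a * (α b)⁻¹)
    (hρi : ∀ s ∈ S, Injective (ρ s)) {u : X → G → X}
    (hu : ∀ x : X, ∀ g ∈ Qset P θ x, ∀ a ∈ P, ∀ b ∈ P, g = a * b⁻¹ → θ a x = θ b (u x g))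
    {v : Y → H → Y}
    (hv : ∀ y : Y, ∀ h ∈ Qset S ρ y, ∀ a ∈ S, ∀ b ∈ S, h = a * b⁻¹ → ρ a y = ρ b (v y h))
    {x : X} {g : G} (hg : g ∈ Qset P θ x) : φ (u x g) = v (φ x) (β g) := by
  obtain ⟨a, ha, b, hb, -, hgab, -⟩ := id hg
  have hβg : β g = α a * (α b)⁻¹ := hgab ▸ hβ a ha b hb
  apply hρi (α b) (hα hb)
  rw [← hconj b hb, ← hu x g hg a ha b hb hgab, hconj a ha,
    hv _ _ (map_mem_Qset hα hconj hβ hg) _ (hα ha) _ (hα hb) hβg]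

end Conjugacy

theorem stmt_9_general {G H : Type*} [Group G] [Group H]
    [TopologicalSpace G] [DiscreteTopology G] [TopologicalSpace H] [DiscreteTopology H]
    {X Y : Type*} [TopologicalSpace X] [TopologicalSpace Y]
    (P : Set G) (hPmul : ∀ a ∈ P, ∀ b ∈ P, a * b ∈ P)
    (hPG : ∀ g : G, ∃ a ∈ P, ∃ b ∈ P, g = a * b⁻¹)
    (S : Set H) (hSH : ∀ h : H, ∃ a ∈ S, ∃ b ∈ S, h = a * b⁻¹)
    (θ : G → X → X)
    (hθi : ∀ a ∈ P, Function.Injective (θ a))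
    (ρ : H → Y → Y)
    (hρi : ∀ s ∈ S, Function.Injective (ρ s))
    (u : X → G → X)
    (hu : ∀ x : X, ∀ g ∈ Qset P θ x, ∀ a ∈ P, ∀ b ∈ P,
      g = a * b⁻¹ → θ a x = θ b (u x g))
    (v : Y → H → Y)
    (hv : ∀ y : Y, ∀ h ∈ Qset S ρ y, ∀ a ∈ S, ∀ b ∈ S,
      h = a * b⁻¹ → ρ a y = ρ b (v y h))
    (φ : X ≃ₜ Y) (α : G → H)
    (hαbij : Set.BijOn α P S)
    (hαmul : ∀ a ∈ P, ∀ b ∈ P, α (a * b) = α a * α b)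
    (hconj : ∀ m ∈ P, ∀ x : X, φ (θ m x) = ρ (α m) (φ x))
    (β : G → H)
    (hβ : ∀ a ∈ P, ∀ b ∈ P, β (a * b⁻¹) = α a * (α b)⁻¹) :
    (∀ a ∈ P, ∀ b ∈ P, ∀ c ∈ P, ∀ d ∈ P,
      a * b⁻¹ = c * d⁻¹ → α a * (α b)⁻¹ = α c * (α d)⁻¹) ∧
    Function.Bijective β ∧
    (∀ g g' : G, β (g * g') = β g * β g') ∧
    (∀ (x : X) (g : G), g ∈ Qset P θ x →
      β g ∈ Qset S ρ (φ x) ∧ φ (u x g) = v (φ x) (β g)) ∧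
    (∀ (y : Y) (h : H), h ∈ Qset S ρ y → ∀ g : G, β g = h →
      g ∈ Qset P θ (φ.symm y) ∧ φ.symm (v y h) = u (φ.symm y) g) ∧
    Continuous (fun p : {q : X × G // q.2 ∈ Qset P θ q.1} => β p.1.2) ∧
    (∃ b : {q : Y × H // q.2 ∈ Qset S ρ q.1} → G, Continuous b ∧
      (∀ q : {q : Y × H // q.2 ∈ Qset S ρ q.1}, β (b q) = q.1.2) ∧
      (∀ q : {q : Y × H // q.2 ∈ Qset S ρ q.1},
        b q ∈ Qset P θ (φ.symm q.1.1) ∧ φ.symm (v q.1.1 q.1.2) = u (φ.symm q.1.1) (b q))) := by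
  have hβmul := map_mul_of_map_mul_inv hPmul hPG hαmul hβ
  have hβbij : Bijective β := ⟨injective_of_map_mul_inv hβmul hPG hαbij.injOn hβ,
    surjective_of_map_mul_inv hSH hαbij.surjOn hβ⟩
  set e : G ≃* H := MulEquiv.ofBijective (MonoidHom.mk' β hβmul) hβbij
  have hα' : MapsTo (invFunOn α P) S P := hαbij.surjOn.mapsTo_invFunOn
  have hconj' := φ.toEquiv.symm_conj_invFunOn hαbij hconj
  have he' : ∀ s ∈ S, ∀ t ∈ S, e.symm (s * t⁻¹) = invFunOn α P s * (invFunOn α P t)⁻¹ :=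
    fun _ hs _ ht => e.symm_mul_inv_eq_invFunOn hαbij hβ hs ht
  have bwd : ∀ y : Y, ∀ h ∈ Qset S ρ y,
      e.symm h ∈ Qset P θ (φ.symm y) ∧ φ.symm (v y h) = u (φ.symm y) (e.symm h) :=
    fun y h hh => ⟨map_mem_Qset hα' hconj' he' hh, map_u_eq_v hα' hconj' he' hθi hv hu hh⟩
  refine ⟨fun a ha b hb c hc d hd => mul_inv_map_eq_of_mul_inv_eq hPG hαmul ha hb hc hd,
    hβbij, hβmul, fun x g hg => ⟨map_mem_Qset hαbij.mapsTo hconj hβ hg,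
      map_u_eq_v hαbij.mapsTo hconj hβ hρi hu hv hg⟩, ?_,
    continuous_of_discreteTopology.comp (continuous_snd.comp continuous_subtype_val),
    fun q => e.symm q.1.2,
    continuous_of_discreteTopology.comp (continuous_snd.comp continuous_subtype_val),
    fun q => e.apply_symm_apply q.1.2, fun q => bwd q.1.1 q.1.2 q.2⟩
  rintro y _ hh g rfl
  have hg : e.symm (β g) = g := e.symm_apply_apply g
  obtain ⟨hmem, hinv⟩ := bwd y (β g) hh
  rw [hg] at hmem hinv
  exact ⟨hmem, hinv⟩

/-- if the injective actions `P ↷ X` and `S ↷ Y` are conjugate via a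
homeomorphism `φ` and a semigroup isomorphism `α : P → S`, then (a) `β(ab⁻¹) = α(a)α(b)⁻¹`
is a well-defined group isomorphism `G → H`; (b) for `(x,g) ∈ X ⋊ P`, `β(g) ∈ Q_{φ(x)}` and
`φ(u(x,g)) = u(φ(x), β(g))`, and symmetrically with `β⁻¹`; consequently the actions are
continuously orbit equivalent with `a(x,g) = β(g)` and `b(y,h) = β⁻¹(h)`. -/
theorem stmt_9 {G H : Type*} [Group G] [Countable G] [Group H] [Countable H]
    [TopologicalSpace G] [DiscreteTopology G] [TopologicalSpace H] [DiscreteTopology H]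
    {X Y : Type*} [TopologicalSpace X] [CompactSpace X] [T2Space X]
    [SecondCountableTopology X]
    [TopologicalSpace Y] [CompactSpace Y] [T2Space Y] [SecondCountableTopology Y]
    (P : Set G) (hP1 : (1 : G) ∈ P) (hPmul : ∀ a ∈ P, ∀ b ∈ P, a * b ∈ P)
    (hPG : ∀ g : G, ∃ a ∈ P, ∃ b ∈ P, g = a * b⁻¹)
    (S : Set H) (hS1 : (1 : H) ∈ S) (hSmul : ∀ a ∈ S, ∀ b ∈ S, a * b ∈ S)
    (hSH : ∀ h : H, ∃ a ∈ S, ∃ b ∈ S, h = a * b⁻¹)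
    (θ : G → X → X)
    (hθc : ∀ a ∈ P, Continuous (θ a))
    (hθi : ∀ a ∈ P, Function.Injective (θ a))
    (hθ1 : θ 1 = id)
    (hθm : ∀ a ∈ P, ∀ b ∈ P, ∀ x : X, θ a (θ b x) = θ (b * a) x)
    (hθopen : ∀ a ∈ P, IsOpen (Set.range (θ a)))
    (ρ : H → Y → Y)
    (hρc : ∀ s ∈ S, Continuous (ρ s))
    (hρi : ∀ s ∈ S, Function.Injective (ρ s))
    (hρ1 : ρ 1 = id)
    (hρm : ∀ a ∈ S, ∀ b ∈ S, ∀ y : Y, ρ a (ρ b y) = ρ (b * a) y)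
    (hρopen : ∀ s ∈ S, IsOpen (Set.range (ρ s)))
    (u : X → G → X)
    (hu : ∀ x : X, ∀ g ∈ Qset P θ x, ∀ a ∈ P, ∀ b ∈ P,
      g = a * b⁻¹ → θ a x = θ b (u x g))
    (v : Y → H → Y)
    (hv : ∀ y : Y, ∀ h ∈ Qset S ρ y, ∀ a ∈ S, ∀ b ∈ S,
      h = a * b⁻¹ → ρ a y = ρ b (v y h))
    (φ : X ≃ₜ Y) (α : G → H)
    (hαS : ∀ a ∈ P, α a ∈ S)
    (hαbij : Set.BijOn α P S)
    (hαmul : ∀ a ∈ P, ∀ b ∈ P, α (a * b) = α a * α b)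
    (hconj : ∀ m ∈ P, ∀ x : X, φ (θ m x) = ρ (α m) (φ x))
    (β : G → H)
    (hβ : ∀ a ∈ P, ∀ b ∈ P, β (a * b⁻¹) = α a * (α b)⁻¹) :
    (∀ a ∈ P, ∀ b ∈ P, ∀ c ∈ P, ∀ d ∈ P,
      a * b⁻¹ = c * d⁻¹ → α a * (α b)⁻¹ = α c * (α d)⁻¹) ∧
    Function.Bijective β ∧
    (∀ g g' : G, β (g * g') = β g * β g') ∧
    (∀ (x : X) (g : G), g ∈ Qset P θ x →
      β g ∈ Qset S ρ (φ x) ∧ φ (u x g) = v (φ x) (β g)) ∧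
    (∀ (y : Y) (h : H), h ∈ Qset S ρ y → ∀ g : G, β g = h →
      g ∈ Qset P θ (φ.symm y) ∧ φ.symm (v y h) = u (φ.symm y) g) ∧
    Continuous (fun p : {q : X × G // q.2 ∈ Qset P θ q.1} => β p.1.2) ∧
    (∃ b : {q : Y × H // q.2 ∈ Qset S ρ q.1} → G, Continuous b ∧
      (∀ q : {q : Y × H // q.2 ∈ Qset S ρ q.1}, β (b q) = q.1.2) ∧
      (∀ q : {q : Y × H // q.2 ∈ Qset S ρ q.1},
        b q ∈ Qset P θ (φ.symm q.1.1) ∧ φ.symm (v q.1.1 q.1.2) = u (φ.symm q.1.1) (b q))) :=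
  stmt_9_general P hPmul hPG S hSH θ hθi ρ hρi u hu v hv φ α hαbij hαmul hconj β hβ
end

section
/- Suppose both actions θ and ρ are topologically free and are continuously orbit equivalent via φ, a, b. Then a and b are continuous cocycles: whenever (x, g₁) ∈ X ⋊ P and (u(x, g₁), g₂) ∈ X ⋊ P, one has a(x, g₁g₂) = a(x, g₁) · a(u(x, g₁), g₂); and whenever (y, h₁) ∈ Y ⋊ S and (u(y, h₁), h₂) ∈ Y ⋊ S, one has b(y, h₁h₂) = b(y, h₁) · b(u(y, h₁), h₂). -/
open Topology Filter

theorem eventually_forall_mem_apply_eq {α β : Type*} [TopologicalSpace α] [TopologicalSpace β]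
    [DiscreteTopology β] {s : Set α} {f : s → β} (hf : Continuous f) (p : s) :
    ∀ᶠ q in 𝓝 (p : α), ∀ hq : q ∈ s, f ⟨q, hq⟩ = f p := by
  have hp : ∀ᶠ q in 𝓝 p, f q = f p := hf.continuousAt ((isOpen_discrete {f p}).mem_nhds rfl)
  rw [nhds_subtype, eventually_comap] at hp
  filter_upwards [hp] with q hq hqs using hq ⟨q, hqs⟩ rfl

structure OpenInjectiveAction (G X : Type*) [Group G] [TopologicalSpace X] where
  P : Set G
  mul_mem : ∀ a ∈ P, ∀ b ∈ P, a * b ∈ P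
  exists_eq_mul_inv : ∀ g : G, ∃ a ∈ P, ∃ b ∈ P, g = a * b⁻¹
  θ : G → X → X
  continuous : ∀ a ∈ P, Continuous (θ a)
  injective : ∀ a ∈ P, Function.Injective (θ a)
  map_map : ∀ a ∈ P, ∀ b ∈ P, ∀ x : X, θ a (θ b x) = θ (b * a) x
  isOpen_range : ∀ a ∈ P, IsOpen (Set.range (θ a))
  u : X → G → X
  map_u : ∀ x : X, ∀ g ∈ Qset P θ x, ∀ a ∈ P, ∀ b ∈ P, g = a * b⁻¹ → θ a x = θ b (u x g)

namespace OpenInjectiveAction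

variable {G X : Type*} [Group G] [TopologicalSpace X] (A : OpenInjectiveAction G X)

abbrev Q (x : X) : Set G := Qset A.P A.θ x

def IsFreeAt (x : X) : Prop := ∀ g ∈ A.Q x, g ≠ 1 → A.u x g ≠ x

/-- `(x, g)` is an arrow of `X ⋊ P` from `x` to `z`, i.e. `g ∈ Q_x` and
`u(x, g) = z`. -/
def IsArrow (x : X) (g : G) (z : X) : Prop :=
  ∃ a ∈ A.P, ∃ b ∈ A.P, g = a * b⁻¹ ∧ A.θ a x = A.θ b z

variable {A} {x y z : X} {g g' : G}

theorem isArrow_u (hg : g ∈ A.Q x) : A.IsArrow x g (A.u x g) := by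
  obtain ⟨a, ha, b, hb, -, hab, -⟩ := id hg
  exact ⟨a, ha, b, hb, hab, A.map_u x g hg a ha b hb hab⟩

theorem IsArrow.mem_Q (h : A.IsArrow x g z) : g ∈ A.Q x := by
  obtain ⟨a, ha, b, hb, hab, hθ⟩ := h
  exact ⟨a, ha, b, hb, z, hab, hθ⟩

theorem IsArrow.eq_u (h : A.IsArrow x g z) : z = A.u x g := by
  obtain ⟨a, ha, b, hb, hab, hθ⟩ := id h
  exact A.injective b hb (hθ.symm.trans (A.map_u x g h.mem_Q a ha b hb hab))

theorem IsArrow.inv (h : A.IsArrow x g z) : A.IsArrow z g⁻¹ x := by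
  obtain ⟨a, ha, b, hb, hab, hθ⟩ := h
  exact ⟨b, hb, a, ha, by rw [hab, mul_inv_rev, inv_inv], hθ.symm⟩

theorem IsArrow.mul (h : A.IsArrow x g y) (h' : A.IsArrow y g' z) :
    A.IsArrow x (g * g') z := by
  obtain ⟨a, ha, b, hb, hab, hθ⟩ := h
  obtain ⟨a', ha', b', hb', hab', hθ'⟩ := h'
  -- `b⁻¹ a' = c d⁻¹` lets both arrows be written with the common middle term `b c = a' d`.
  obtain ⟨c, hc, d, hd, hcd⟩ := A.exists_eq_mul_inv (b⁻¹ * a')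
  have ha'_eq : a' = b * (c * d⁻¹) := by rw [← hcd]; group
  have hbc : b * c = a' * d := by rw [ha'_eq]; group
  refine ⟨a * c, A.mul_mem a ha c hc, b' * d, A.mul_mem b' hb' d hd, ?_, ?_⟩
  · rw [hab, hab', ha'_eq]; group
  · calc A.θ (a * c) x = A.θ c (A.θ a x) := (A.map_map c hc a ha x).symm
      _ = A.θ (b * c) y := by rw [hθ, A.map_map c hc b hb]
      _ = A.θ d (A.θ a' y) := by rw [hbc, A.map_map d hd a' ha']
      _ = A.θ (b' * d) z := by rw [hθ', A.map_map d hd b' hb']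

theorem u_mul (h : g ∈ A.Q x) (h' : g' ∈ A.Q (A.u x g)) :
    A.u x (g * g') = A.u (A.u x g) g' :=
  ((isArrow_u h).mul (isArrow_u h')).eq_u.symm

theorem IsArrow.eq_of_isFreeAt (hx : A.IsFreeAt x) (h : A.IsArrow x g z)
    (h' : A.IsArrow x g' z) : g = g' := by
  have hloop : A.IsArrow x (g * g'⁻¹) x := h.mul h'.inv
  by_contra hne
  exact hx _ hloop.mem_Q (mul_inv_eq_one.not.mpr hne) hloop.eq_u.symm

theorem isOpen_setOf_mem_Q (g : G) : IsOpen {x | g ∈ A.Q x} := by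
  refine isOpen_iff_mem_nhds.mpr ?_
  rintro x ⟨a, ha, b, hb, y, rfl, hy⟩
  have hdom : A.θ a ⁻¹' Set.range (A.θ b) ∈ 𝓝 x :=
    ((A.isOpen_range b hb).preimage (A.continuous a ha)).mem_nhds ⟨y, hy.symm⟩
  filter_upwards [hdom] with x' ⟨y', hy'⟩ using ⟨a, ha, b, hb, y', rfl, hy'.symm⟩

theorem continuousAt_u [CompactSpace X] [T2Space X] (hg : g ∈ A.Q x) :
    ContinuousAt (A.u · g) x := by
  obtain ⟨a, ha, b, hb, -, hab, -⟩ := id hg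
  have hemb : IsClosedEmbedding (A.θ b) :=
    (A.continuous b hb).isClosedEmbedding (A.injective b hb)
  rw [hemb.isInducing.continuousAt_iff]
  refine (A.continuous a ha).continuousAt.congr ?_
  filter_upwards [(A.isOpen_setOf_mem_Q g).mem_nhds hg] with x' hx'
  exact A.map_u x' g hx' a ha b hb hab

variable {H Y : Type*} [Group H] [TopologicalSpace Y] (B : OpenInjectiveAction H Y)
  (φ : X ≃ₜ Y) {c : {q : X × G // q.2 ∈ A.Q q.1} → H}

theorem cocycle_of_isFreeAt
    (hc : ∀ p : {q : X × G // q.2 ∈ A.Q q.1},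
      c p ∈ B.Q (φ p.1.1) ∧ φ (A.u p.1.1 p.1.2) = B.u (φ p.1.1) (c p))
    (hx : B.IsFreeAt (φ x)) (h₁ : g ∈ A.Q x) (h₂ : g' ∈ A.Q (A.u x g))
    (h₃ : g * g' ∈ A.Q x) :
    c ⟨(x, g * g'), h₃⟩ = c ⟨(x, g), h₁⟩ * c ⟨(A.u x g, g'), h₂⟩ := by
  have arrow : ∀ p, B.IsArrow (φ p.1.1) (c p) (φ (A.u p.1.1 p.1.2)) := fun p =>
    (hc p).2 ▸ isArrow_u (hc p).1
  have e₃ := arrow ⟨(x, g * g'), h₃⟩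
  rw [u_mul h₁ h₂] at e₃
  exact e₃.eq_of_isFreeAt hx ((arrow ⟨(x, g), h₁⟩).mul (arrow ⟨(A.u x g, g'), h₂⟩))

theorem cocycle [TopologicalSpace G] [TopologicalSpace H] [DiscreteTopology H]
    [CompactSpace X] [T2Space X] (hcont : Continuous c)
    (hc : ∀ p : {q : X × G // q.2 ∈ A.Q q.1},
      c p ∈ B.Q (φ p.1.1) ∧ φ (A.u p.1.1 p.1.2) = B.u (φ p.1.1) (c p))
    (hfree : Dense {y | B.IsFreeAt y}) (x : X) (g g' : G) (h₁ : g ∈ A.Q x)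
    (h₂ : g' ∈ A.Q (A.u x g)) (h₃ : g * g' ∈ A.Q x) :
    c ⟨(x, g * g'), h₃⟩ = c ⟨(x, g), h₁⟩ * c ⟨(A.u x g, g'), h₂⟩ := by
  have hu : ContinuousAt (A.u · g) x := continuousAt_u h₁
  have hpair : ContinuousAt (fun x' => (x', g)) x := continuousAt_id.prodMk continuousAt_const
  have hpair' : ContinuousAt (fun x' => (A.u x' g, g')) x := hu.prodMk continuousAt_const
  have hnear : ∀ᶠ x' in 𝓝 x, ∃ (k₁ : g ∈ A.Q x') (k₂ : g' ∈ A.Q (A.u x' g))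
      (k₃ : g * g' ∈ A.Q x'), c ⟨(x', g), k₁⟩ = c ⟨(x, g), h₁⟩ ∧
        c ⟨(A.u x' g, g'), k₂⟩ = c ⟨(A.u x g, g'), h₂⟩ ∧
        c ⟨(x', g * g'), k₃⟩ = c ⟨(x, g * g'), h₃⟩ := by
    filter_upwards [(A.isOpen_setOf_mem_Q g).mem_nhds h₁,
      hu.preimage_mem_nhds ((A.isOpen_setOf_mem_Q g').mem_nhds h₂),
      (A.isOpen_setOf_mem_Q (g * g')).mem_nhds h₃,
      hpair.eventually (eventually_forall_mem_apply_eq hcont ⟨(x, g), h₁⟩),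
      hpair'.eventually (eventually_forall_mem_apply_eq hcont ⟨(A.u x g, g'), h₂⟩),
      (continuousAt_id.prodMk continuousAt_const).eventually
        (eventually_forall_mem_apply_eq hcont ⟨(x, g * g'), h₃⟩)]
      with x' k₁ k₂ k₃ e₁ e₂ e₃
    exact ⟨k₁, k₂, k₃, e₁ k₁, e₂ k₂, e₃ k₃⟩
  obtain ⟨x', hx', k₁, k₂, k₃, e₁, e₂, e₃⟩ :=
    (hfree.preimage φ.isOpenMap).inter_nhds_nonempty hnear
  rw [← e₁, ← e₂, ← e₃]
  exact cocycle_of_isFreeAt B φ hc hx' k₁ k₂ k₃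

end OpenInjectiveAction

theorem stmt_10_general {G H : Type*} [Group G] [Group H] 
    [TopologicalSpace G] [DiscreteTopology G] [TopologicalSpace H] [DiscreteTopology H]
    {X Y : Type*} [TopologicalSpace X] [CompactSpace X] [T2Space X]
    [TopologicalSpace Y] [CompactSpace Y] [T2Space Y]
    (P : Set G) (hPmul : ∀ a ∈ P, ∀ b ∈ P, a * b ∈ P)
    (hPG : ∀ g : G, ∃ a ∈ P, ∃ b ∈ P, g = a * b⁻¹)
    (S : Set H) (hSmul : ∀ a ∈ S, ∀ b ∈ S, a * b ∈ S)
    (hSH : ∀ h : H, ∃ a ∈ S, ∃ b ∈ S, h = a * b⁻¹)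
    (θ : G → X → X)
    (hθc : ∀ a ∈ P, Continuous (θ a))
    (hθi : ∀ a ∈ P, Function.Injective (θ a))
    (hθm : ∀ a ∈ P, ∀ b ∈ P, ∀ x : X, θ a (θ b x) = θ (b * a) x)
    (hθopen : ∀ a ∈ P, IsOpen (Set.range (θ a)))
    (ρ : H → Y → Y)
    (hρc : ∀ s ∈ S, Continuous (ρ s))
    (hρi : ∀ s ∈ S, Function.Injective (ρ s))
    (hρm : ∀ a ∈ S, ∀ b ∈ S, ∀ y : Y, ρ a (ρ b y) = ρ (b * a) y)
    (hρopen : ∀ s ∈ S, IsOpen (Set.range (ρ s)))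
    (u : X → G → X)
    (hu : ∀ x : X, ∀ g ∈ Qset P θ x, ∀ a ∈ P, ∀ b ∈ P,
      g = a * b⁻¹ → θ a x = θ b (u x g))
    (v : Y → H → Y)
    (hv : ∀ y : Y, ∀ h ∈ Qset S ρ y, ∀ a ∈ S, ∀ b ∈ S,
      h = a * b⁻¹ → ρ a y = ρ b (v y h))
    (hfreeX : Dense {x : X | ∀ g ∈ Qset P θ x, g ≠ 1 → u x g ≠ x})
    (hfreeY : Dense {y : Y | ∀ h ∈ Qset S ρ y, h ≠ 1 → v y h ≠ y})
    (φ : X ≃ₜ Y)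
    (a : {q : X × G // q.2 ∈ Qset P θ q.1} → H)
    (b : {q : Y × H // q.2 ∈ Qset S ρ q.1} → G)
    (hacont : Continuous a) (hbcont : Continuous b)
    (ha : ∀ p : {q : X × G // q.2 ∈ Qset P θ q.1},
      a p ∈ Qset S ρ (φ p.1.1) ∧ φ (u p.1.1 p.1.2) = v (φ p.1.1) (a p))
    (hb : ∀ q : {q : Y × H // q.2 ∈ Qset S ρ q.1},
      b q ∈ Qset P θ (φ.symm q.1.1) ∧ φ.symm (v q.1.1 q.1.2) = u (φ.symm q.1.1) (b q)) :
    (∀ (x : X) (g₁ g₂ : G) (h1 : g₁ ∈ Qset P θ x) (h2 : g₂ ∈ Qset P θ (u x g₁))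
      (h3 : g₁ * g₂ ∈ Qset P θ x),
      a ⟨(x, g₁ * g₂), h3⟩ = a ⟨(x, g₁), h1⟩ * a ⟨(u x g₁, g₂), h2⟩) ∧
    (∀ (y : Y) (h₁ h₂ : H) (k1 : h₁ ∈ Qset S ρ y) (k2 : h₂ ∈ Qset S ρ (v y h₁))
      (k3 : h₁ * h₂ ∈ Qset S ρ y),
      b ⟨(y, h₁ * h₂), k3⟩ = b ⟨(y, h₁), k1⟩ * b ⟨(v y h₁, h₂), k2⟩) := by
  let A : OpenInjectiveAction G X := ⟨P, hPmul, hPG, θ, hθc, hθi, hθm, hθopen, u, hu⟩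
  let B : OpenInjectiveAction H Y := ⟨S, hSmul, hSH, ρ, hρc, hρi, hρm, hρopen, v, hv⟩
  exact ⟨A.cocycle B φ hacont ha hfreeY, B.cocycle A φ.symm hbcont hb hfreeX⟩

/-- for topologically free injective actions that are continuously orbit
equivalent via `(φ, a, b)`, the maps `a` and `b` are (continuous) cocycles. -/
theorem stmt_10 {G H : Type*} [Group G] [Countable G] [Group H] [Countable H]
    [TopologicalSpace G] [DiscreteTopology G] [TopologicalSpace H] [DiscreteTopology H]
    {X Y : Type*} [TopologicalSpace X] [CompactSpace X] [T2Space X]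
    [SecondCountableTopology X]
    [TopologicalSpace Y] [CompactSpace Y] [T2Space Y] [SecondCountableTopology Y]
    (P : Set G) (hP1 : (1 : G) ∈ P) (hPmul : ∀ a ∈ P, ∀ b ∈ P, a * b ∈ P)
    (hPG : ∀ g : G, ∃ a ∈ P, ∃ b ∈ P, g = a * b⁻¹)
    (S : Set H) (hS1 : (1 : H) ∈ S) (hSmul : ∀ a ∈ S, ∀ b ∈ S, a * b ∈ S)
    (hSH : ∀ h : H, ∃ a ∈ S, ∃ b ∈ S, h = a * b⁻¹)
    (θ : G → X → X)
    (hθc : ∀ a ∈ P, Continuous (θ a))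
    (hθi : ∀ a ∈ P, Function.Injective (θ a))
    (hθ1 : θ 1 = id)
    (hθm : ∀ a ∈ P, ∀ b ∈ P, ∀ x : X, θ a (θ b x) = θ (b * a) x)
    (hθopen : ∀ a ∈ P, IsOpen (Set.range (θ a)))
    (ρ : H → Y → Y)
    (hρc : ∀ s ∈ S, Continuous (ρ s))
    (hρi : ∀ s ∈ S, Function.Injective (ρ s))
    (hρ1 : ρ 1 = id)
    (hρm : ∀ a ∈ S, ∀ b ∈ S, ∀ y : Y, ρ a (ρ b y) = ρ (b * a) y)
    (hρopen : ∀ s ∈ S, IsOpen (Set.range (ρ s)))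
    (u : X → G → X)
    (hu : ∀ x : X, ∀ g ∈ Qset P θ x, ∀ a ∈ P, ∀ b ∈ P,
      g = a * b⁻¹ → θ a x = θ b (u x g))
    (v : Y → H → Y)
    (hv : ∀ y : Y, ∀ h ∈ Qset S ρ y, ∀ a ∈ S, ∀ b ∈ S,
      h = a * b⁻¹ → ρ a y = ρ b (v y h))
    (hfreeX : Dense {x : X | ∀ g ∈ Qset P θ x, g ≠ 1 → u x g ≠ x})
    (hfreeY : Dense {y : Y | ∀ h ∈ Qset S ρ y, h ≠ 1 → v y h ≠ y})
    (φ : X ≃ₜ Y)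
    (a : {q : X × G // q.2 ∈ Qset P θ q.1} → H)
    (b : {q : Y × H // q.2 ∈ Qset S ρ q.1} → G)
    (hacont : Continuous a) (hbcont : Continuous b)
    (ha : ∀ p : {q : X × G // q.2 ∈ Qset P θ q.1},
      a p ∈ Qset S ρ (φ p.1.1) ∧ φ (u p.1.1 p.1.2) = v (φ p.1.1) (a p))
    (hb : ∀ q : {q : Y × H // q.2 ∈ Qset S ρ q.1},
      b q ∈ Qset P θ (φ.symm q.1.1) ∧ φ.symm (v q.1.1 q.1.2) = u (φ.symm q.1.1) (b q)) :
    (∀ (x : X) (g₁ g₂ : G) (h1 : g₁ ∈ Qset P θ x) (h2 : g₂ ∈ Qset P θ (u x g₁))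
      (h3 : g₁ * g₂ ∈ Qset P θ x),
      a ⟨(x, g₁ * g₂), h3⟩ = a ⟨(x, g₁), h1⟩ * a ⟨(u x g₁, g₂), h2⟩) ∧
    (∀ (y : Y) (h₁ h₂ : H) (k1 : h₁ ∈ Qset S ρ y) (k2 : h₂ ∈ Qset S ρ (v y h₁))
      (k3 : h₁ * h₂ ∈ Qset S ρ y),
      b ⟨(y, h₁ * h₂), k3⟩ = b ⟨(y, h₁), k1⟩ * b ⟨(v y h₁, h₂), k2⟩) :=
  stmt_10_general P hPmul hPG S hSmul hSH θ hθc hθi hθm hθopen ρ hρc hρi hρm hρopen u hu v hv hfreeX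
    hfreeY φ a b hacont hbcont ha hb
end

section
/- Suppose Λ : X ⋊ P → Y ⋊ S is an isomorphism of topological groupoids: a homeomorphism that maps the unit space X × {e} bijectively onto the unit space Y × {e} and is multiplicative in the sense that whenever (x, g) ∈ X ⋊ P and (u(x, g), h) ∈ X ⋊ P, writing Λ(x, g) = (y₁, k₁) and Λ(u(x, g), h) = (y₂, k₂), one has y₂ = u(y₁, k₁) and Λ(x, gh) = (y₁, k₁k₂). Then the actions θ and ρ are continuously orbit equivalent; explicitly, defining φ(x) by Λ(x, e) = (φ(x), e), a(x, g) as the second coordinate of Λ(x, g), and b(y, h) as the second coordinate of Λ⁻¹(y, h), the data (φ, a, b) implements a continuous orbit equivalence. (No topological freeness is assumed.) -/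
namespace Qset

variable {G X : Type*} [Group G] {P : Set G} {θ : G → X → X}

theorem one_mem (hP1 : (1 : G) ∈ P) (x : X) : (1 : G) ∈ Qset P θ x :=
  ⟨1, hP1, 1, hP1, x, (mul_inv_cancel 1).symm, rfl⟩

theorem apply_one_eq_self (hP1 : (1 : G) ∈ P) (hθ1 : θ 1 = id) {u : X → G → X}
    (hu : ∀ x : X, ∀ g ∈ Qset P θ x, ∀ a ∈ P, ∀ b ∈ P, g = a * b⁻¹ → θ a x = θ b (u x g))
    (x : X) : u x 1 = x := by
  simpa [hθ1] using (hu x 1 (one_mem hP1 x) 1 hP1 1 hP1 (mul_inv_cancel 1).symm).symm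

end Qset

/-! A subset `{q : X × G // q.2 ∈ A q.1}` containing all units `(x, 1)` stands for a
transformation groupoid with unit space `X` and range map `(x, g) ↦ x`. -/

section UnitSpace

variable {X Y G H : Type*} [One G] [One H] {A : X → Set G} {B : Y → Set H}

def unitMap (hA : ∀ x, (1 : G) ∈ A x)
    (Λ : {q : X × G // q.2 ∈ A q.1} → {q : Y × H // q.2 ∈ B q.1}) (x : X) : Y :=
  (Λ ⟨(x, 1), hA x⟩ : Y × H).1

theorem apply_unit_eq (hA : ∀ x, (1 : G) ∈ A x)
    {Λ : {q : X × G // q.2 ∈ A q.1} → {q : Y × H // q.2 ∈ B q.1}}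
    (hunit : ∀ p : {q : X × G // q.2 ∈ A q.1}, p.1.2 = 1 ↔ (Λ p : Y × H).2 = 1)
    (x : X) (hx : (1 : G) ∈ A x) : (Λ ⟨(x, 1), hx⟩ : Y × H) = (unitMap hA Λ x, 1) :=
  Prod.ext rfl ((hunit _).mp rfl)

theorem symm_unit_iff {Λ : {q : X × G // q.2 ∈ A q.1} ≃ {q : Y × H // q.2 ∈ B q.1}}
    (hunit : ∀ p : {q : X × G // q.2 ∈ A q.1}, p.1.2 = 1 ↔ (Λ p : Y × H).2 = 1)
    (q : {q : Y × H // q.2 ∈ B q.1}) : q.1.2 = 1 ↔ (Λ.symm q : X × G).2 = 1 := by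
  simpa using (hunit (Λ.symm q)).symm

theorem unitMap_symm_unitMap (hA : ∀ x, (1 : G) ∈ A x) (hB : ∀ y, (1 : H) ∈ B y)
    {Λ : {q : X × G // q.2 ∈ A q.1} ≃ {q : Y × H // q.2 ∈ B q.1}}
    (hunit : ∀ p : {q : X × G // q.2 ∈ A q.1}, p.1.2 = 1 ↔ (Λ p : Y × H).2 = 1) (x : X) :
    unitMap hB Λ.symm (unitMap hA Λ x) = x := by
  have hΛx : Λ ⟨(x, 1), hA x⟩ = ⟨(unitMap hA Λ x, 1), hB _⟩ :=
    Subtype.ext (apply_unit_eq hA hunit x (hA x))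
  change (Λ.symm ⟨(unitMap hA Λ x, 1), hB _⟩ : X × G).1 = x
  rw [← hΛx, Λ.symm_apply_apply]

variable [TopologicalSpace X] [TopologicalSpace Y] [TopologicalSpace G] [TopologicalSpace H]

def unitHomeomorph (hA : ∀ x, (1 : G) ∈ A x) (hB : ∀ y, (1 : H) ∈ B y)
    (Λ : {q : X × G // q.2 ∈ A q.1} ≃ₜ {q : Y × H // q.2 ∈ B q.1})
    (hunit : ∀ p : {q : X × G // q.2 ∈ A q.1}, p.1.2 = 1 ↔ (Λ p : Y × H).2 = 1) : X ≃ₜ Y where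
  toFun := unitMap hA Λ
  invFun := unitMap hB Λ.symm
  left_inv := unitMap_symm_unitMap hA hB (Λ := Λ.toEquiv) hunit
  right_inv := unitMap_symm_unitMap hB hA (Λ := Λ.toEquiv.symm) (symm_unit_iff hunit)
  continuous_toFun := by unfold unitMap; fun_prop
  continuous_invFun := by unfold unitMap; fun_prop

end UnitSpace

section Multiplicative

variable {X Y G H : Type*} [MulOneClass G] [MulOneClass H] {A : X → Set G} {B : Y → Set H}

/-- Multiplicativity of `Λ` on composable pairs `(x, g), (u x g, h)`, whose product is
`(x, g * h)`. -/
def IsMultiplicative (u : X → G → X) (v : Y → H → Y)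
    (Λ : {q : X × G // q.2 ∈ A q.1} → {q : Y × H // q.2 ∈ B q.1}) : Prop :=
  ∀ (x : X) (g h : G) (h1 : g ∈ A x) (h2 : h ∈ A (u x g)) (h3 : g * h ∈ A x),
    (Λ ⟨(u x g, h), h2⟩ : Y × H).1
        = v (Λ ⟨(x, g), h1⟩ : Y × H).1 (Λ ⟨(x, g), h1⟩ : Y × H).2 ∧
    (Λ ⟨(x, g * h), h3⟩ : Y × H)
        = ((Λ ⟨(x, g), h1⟩ : Y × H).1,
           (Λ ⟨(x, g), h1⟩ : Y × H).2 * (Λ ⟨(u x g, h), h2⟩ : Y × H).2)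

variable (hA : ∀ x, (1 : G) ∈ A x) {u : X → G → X} {v : Y → H → Y}
  {Λ : {q : X × G // q.2 ∈ A q.1} → {q : Y × H // q.2 ∈ B q.1}}

theorem IsMultiplicative.fst_apply_eq_unitMap (hmul : IsMultiplicative u v Λ)
    (hu1 : ∀ x, u x 1 = x) (p : {q : X × G // q.2 ∈ A q.1}) :
    (Λ p : Y × H).1 = unitMap hA Λ p.1.1 := by
  obtain ⟨⟨x, g⟩, hg⟩ := p
  have hg' : g ∈ A (u x 1) := (hu1 x).symm ▸ hg
  -- `(x, g) = (x, 1) * (x, g)`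
  have h := (hmul x 1 g (hA x) hg' ((one_mul g).symm ▸ hg)).2
  have hΛ : Λ ⟨(x, g), hg⟩ = Λ ⟨(x, 1 * g), (one_mul g).symm ▸ hg⟩ :=
    congrArg Λ (Subtype.ext (Prod.ext rfl (one_mul g).symm))
  exact (congrArg (fun q => q.1.1) hΛ).trans (congrArg Prod.fst h)

theorem IsMultiplicative.unitMap_source (hmul : IsMultiplicative u v Λ)
    (hunit : ∀ p : {q : X × G // q.2 ∈ A q.1}, p.1.2 = 1 ↔ (Λ p : Y × H).2 = 1)
    (p : {q : X × G // q.2 ∈ A q.1}) :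
    unitMap hA Λ (u p.1.1 p.1.2) = v (Λ p : Y × H).1 (Λ p : Y × H).2 := by
  obtain ⟨⟨x, g⟩, hg⟩ := p
  -- `(x, g) = (x, g) * (u x g, 1)`
  have h := (hmul x g 1 hg (hA _) ((mul_one g).symm ▸ hg)).1
  rwa [apply_unit_eq hA hunit] at h

end Multiplicative

theorem stmt_13_general {G H : Type*} [Group G] [Group H]
    [TopologicalSpace G] [TopologicalSpace H]
    {X Y : Type*} [TopologicalSpace X]
    [TopologicalSpace Y]
    (P : Set G) (hP1 : (1 : G) ∈ P)
    (S : Set H) (hS1 : (1 : H) ∈ S)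
    (θ : G → X → X)
    (hθ1 : θ 1 = id)
    (ρ : H → Y → Y)
    (u : X → G → X)
    (hu : ∀ x : X, ∀ g ∈ Qset P θ x, ∀ a ∈ P, ∀ b ∈ P,
      g = a * b⁻¹ → θ a x = θ b (u x g))
    (v : Y → H → Y)
    (Λ : {q : X × G // q.2 ∈ Qset P θ q.1} ≃ₜ {q : Y × H // q.2 ∈ Qset S ρ q.1})
    (hunit : ∀ p : {q : X × G // q.2 ∈ Qset P θ q.1},
      p.1.2 = 1 ↔ (Λ p : Y × H).2 = 1)
    (hmul : ∀ (x : X) (g h : G) (h1 : g ∈ Qset P θ x) (h2 : h ∈ Qset P θ (u x g))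
      (h3 : g * h ∈ Qset P θ x),
      (Λ ⟨(u x g, h), h2⟩ : Y × H).1
          = v (Λ ⟨(x, g), h1⟩ : Y × H).1 (Λ ⟨(x, g), h1⟩ : Y × H).2 ∧
      (Λ ⟨(x, g * h), h3⟩ : Y × H)
          = ((Λ ⟨(x, g), h1⟩ : Y × H).1,
             (Λ ⟨(x, g), h1⟩ : Y × H).2 * (Λ ⟨(u x g, h), h2⟩ : Y × H).2)) :
    ∃ (φ : X ≃ₜ Y) (a : {q : X × G // q.2 ∈ Qset P θ q.1} → H)
      (b : {q : Y × H // q.2 ∈ Qset S ρ q.1} → G),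
      Continuous a ∧ Continuous b ∧
      (∀ (x : X) (hx : (1 : G) ∈ Qset P θ x), (Λ ⟨(x, 1), hx⟩ : Y × H) = (φ x, 1)) ∧
      (∀ p : {q : X × G // q.2 ∈ Qset P θ q.1}, a p = (Λ p : Y × H).2) ∧
      (∀ q : {q : Y × H // q.2 ∈ Qset S ρ q.1}, b q = (Λ.symm q : X × G).2) ∧
      (∀ p : {q : X × G // q.2 ∈ Qset P θ q.1},
        a p ∈ Qset S ρ (φ p.1.1) ∧ φ (u p.1.1 p.1.2) = v (φ p.1.1) (a p)) ∧
      (∀ q : {q : Y × H // q.2 ∈ Qset S ρ q.1},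
        b q ∈ Qset P θ (φ.symm q.1.1) ∧ φ.symm (v q.1.1 q.1.2) = u (φ.symm q.1.1) (b q)) := by
  have hA := Qset.one_mem (θ := θ) hP1
  set φ := unitHomeomorph hA (Qset.one_mem hS1) Λ hunit
  have hfst (p) : (Λ p : Y × H).1 = φ p.1.1 :=
    IsMultiplicative.fst_apply_eq_unitMap hA hmul (Qset.apply_one_eq_self hP1 hθ1 hu) p
  have hsrc (p) : φ (u p.1.1 p.1.2) = v (φ p.1.1) (Λ p : Y × H).2 := by
    rw [← hfst]
    exact IsMultiplicative.unitMap_source hA hmul hunit p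
  refine ⟨φ, fun p => (Λ p : Y × H).2, fun q => (Λ.symm q : X × G).2, by fun_prop,
    by fun_prop, apply_unit_eq hA hunit, fun _ => rfl, fun _ => rfl,
    fun p => ⟨hfst p ▸ (Λ p).2, hsrc p⟩, ?_⟩
  intro q
  obtain ⟨p, rfl⟩ := Λ.surjective q
  simpa only [Homeomorph.symm_apply_apply, hfst, ← hsrc, φ.symm_apply_apply, and_true] using p.2

/-- if `Λ : X ⋊ P → Y ⋊ S` is an isomorphism of topological groupoids
(a homeomorphism mapping the unit space bijectively onto the unit space and
multiplicative on composable pairs), then the actions are continuously orbit equivalent,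
with `φ` determined by `Λ(x, e) = (φ(x), e)`, `a(x, g)` the second coordinate of
`Λ(x, g)` and `b(y, h)` the second coordinate of `Λ⁻¹(y, h)`. (No topological freeness
is assumed.) -/
theorem stmt_13 {G H : Type*} [Group G] [Countable G] [Group H] [Countable H]
    [TopologicalSpace G] [DiscreteTopology G] [TopologicalSpace H] [DiscreteTopology H]
    {X Y : Type*} [TopologicalSpace X] [CompactSpace X] [T2Space X]
    [SecondCountableTopology X]
    [TopologicalSpace Y] [CompactSpace Y] [T2Space Y] [SecondCountableTopology Y]
    (P : Set G) (hP1 : (1 : G) ∈ P) (hPmul : ∀ a ∈ P, ∀ b ∈ P, a * b ∈ P)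
    (hPG : ∀ g : G, ∃ a ∈ P, ∃ b ∈ P, g = a * b⁻¹)
    (S : Set H) (hS1 : (1 : H) ∈ S) (hSmul : ∀ a ∈ S, ∀ b ∈ S, a * b ∈ S)
    (hSH : ∀ h : H, ∃ a ∈ S, ∃ b ∈ S, h = a * b⁻¹)
    (θ : G → X → X)
    (hθc : ∀ a ∈ P, Continuous (θ a))
    (hθi : ∀ a ∈ P, Function.Injective (θ a))
    (hθ1 : θ 1 = id)
    (hθm : ∀ a ∈ P, ∀ b ∈ P, ∀ x : X, θ a (θ b x) = θ (b * a) x)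
    (hθopen : ∀ a ∈ P, IsOpen (Set.range (θ a)))
    (ρ : H → Y → Y)
    (hρc : ∀ s ∈ S, Continuous (ρ s))
    (hρi : ∀ s ∈ S, Function.Injective (ρ s))
    (hρ1 : ρ 1 = id)
    (hρm : ∀ a ∈ S, ∀ b ∈ S, ∀ y : Y, ρ a (ρ b y) = ρ (b * a) y)
    (hρopen : ∀ s ∈ S, IsOpen (Set.range (ρ s)))
    (u : X → G → X)
    (hu : ∀ x : X, ∀ g ∈ Qset P θ x, ∀ a ∈ P, ∀ b ∈ P,
      g = a * b⁻¹ → θ a x = θ b (u x g))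
    (v : Y → H → Y)
    (hv : ∀ y : Y, ∀ h ∈ Qset S ρ y, ∀ a ∈ S, ∀ b ∈ S,
      h = a * b⁻¹ → ρ a y = ρ b (v y h))
    (Λ : {q : X × G // q.2 ∈ Qset P θ q.1} ≃ₜ {q : Y × H // q.2 ∈ Qset S ρ q.1})
    (hunit : ∀ p : {q : X × G // q.2 ∈ Qset P θ q.1},
      p.1.2 = 1 ↔ (Λ p : Y × H).2 = 1)
    (hmul : ∀ (x : X) (g h : G) (h1 : g ∈ Qset P θ x) (h2 : h ∈ Qset P θ (u x g))
      (h3 : g * h ∈ Qset P θ x),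
      (Λ ⟨(u x g, h), h2⟩ : Y × H).1
          = v (Λ ⟨(x, g), h1⟩ : Y × H).1 (Λ ⟨(x, g), h1⟩ : Y × H).2 ∧
      (Λ ⟨(x, g * h), h3⟩ : Y × H)
          = ((Λ ⟨(x, g), h1⟩ : Y × H).1,
             (Λ ⟨(x, g), h1⟩ : Y × H).2 * (Λ ⟨(u x g, h), h2⟩ : Y × H).2)) :
    ∃ (φ : X ≃ₜ Y) (a : {q : X × G // q.2 ∈ Qset P θ q.1} → H)
      (b : {q : Y × H // q.2 ∈ Qset S ρ q.1} → G),
      Continuous a ∧ Continuous b ∧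
      (∀ (x : X) (hx : (1 : G) ∈ Qset P θ x), (Λ ⟨(x, 1), hx⟩ : Y × H) = (φ x, 1)) ∧
      (∀ p : {q : X × G // q.2 ∈ Qset P θ q.1}, a p = (Λ p : Y × H).2) ∧
      (∀ q : {q : Y × H // q.2 ∈ Qset S ρ q.1}, b q = (Λ.symm q : X × G).2) ∧
      (∀ p : {q : X × G // q.2 ∈ Qset P θ q.1},
        a p ∈ Qset S ρ (φ p.1.1) ∧ φ (u p.1.1 p.1.2) = v (φ p.1.1) (a p)) ∧
      (∀ q : {q : Y × H // q.2 ∈ Qset S ρ q.1},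
        b q ∈ Qset P θ (φ.symm q.1.1) ∧ φ.symm (v q.1.1 q.1.2) = u (φ.symm q.1.1) (b q)) :=
  stmt_13_general P hP1 S hS1 θ hθ1 ρ u hu v Λ hunit hmul
end

section
/- For every x ∈ X and g ∈ G, one has g ∈ Q_x with respect to the action of P₁ if and only if g ∈ Q_x with respect to the action of P₂, and the corresponding points u(x, g) coincide; hence X ⋊ P₁ = X ⋊ P₂ as topological groupoids, and the actions P₁ ↷_θ X and P₂ ↷_θ X are continuously orbit equivalent. However, P₁ ↷_θ X and P₂ ↷_θ X are not conjugate: there is no homeomorphism φ : X → X and semigroup isomorphism α : P₁ → P₂ with φ ∘ θ_m = θ_{α(m)} ∘ φ for all m ∈ P₁. -/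
/-- The rational `ax + b` group: pairs `(a, b)` with `a, b ∈ ℚ`, `a > 0`, i.e. the
matrices `[[a, b], [0, 1]]`, with multiplication `(a, b)(c, d) = (ac, ad + b)`. -/
abbrev AxB : Type := {p : ℚ × ℚ // 0 < p.1}

instance : Group AxB where
  mul p q := ⟨(p.1.1 * q.1.1, p.1.1 * q.1.2 + p.1.2), mul_pos p.2 q.2⟩
  one := ⟨(1, 0), one_pos⟩
  inv p := ⟨(p.1.1⁻¹, -(p.1.2 * p.1.1⁻¹)), inv_pos.mpr p.2⟩
  mul_assoc p q r := by
    refine Subtype.ext (Prod.ext ?_ ?_)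
    · show p.1.1 * q.1.1 * r.1.1 = p.1.1 * (q.1.1 * r.1.1); ring
    · show p.1.1 * q.1.1 * r.1.2 + (p.1.1 * q.1.2 + p.1.2)
        = p.1.1 * (q.1.1 * r.1.2 + q.1.2) + p.1.2; ring
  one_mul p := by
    refine Subtype.ext (Prod.ext ?_ ?_)
    · show (1 : ℚ) * p.1.1 = p.1.1; ring
    · show (1 : ℚ) * p.1.2 + 0 = p.1.2; ring
  mul_one p := by
    refine Subtype.ext (Prod.ext ?_ ?_)
    · show p.1.1 * 1 = p.1.1; ring
    · show p.1.1 * 0 + p.1.2 = p.1.2; ring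
  inv_mul_cancel p := by
    refine Subtype.ext (Prod.ext ?_ ?_)
    · show p.1.1⁻¹ * p.1.1 = 1; exact inv_mul_cancel₀ (ne_of_gt p.2)
    · show p.1.1⁻¹ * p.1.2 + -(p.1.2 * p.1.1⁻¹) = 0; ring

instance : TopologicalSpace AxB := ⊥
instance : DiscreteTopology AxB := ⟨rfl⟩

/-- `P₁ = {(a, b) : a ≥ 1, b ≥ 0}`. -/
def Pone : Set AxB := {g | 1 ≤ g.1.1 ∧ 0 ≤ g.1.2}

/-- `P₂ = {(a, b) : a a positive integer, b ≥ 0}`. -/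
def Ptwo : Set AxB := {g | (∃ n : ℕ, g.1.1 = (n : ℚ)) ∧ 0 ≤ g.1.2}

/-- `X = [-∞, 0] × [0, 1]`, where `[-∞, 0]` is the one-point compactification of
`(-∞, 0]`, modelled as `{t : EReal // t ≤ 0}`. -/
abbrev XIcc : Type := {t : EReal // t ≤ 0} × (Set.Icc (0 : ℝ) 1)

/-- The action `θ_{(a,b)}(x, y) = ((x - b)/a, y/a)` (with the convention
`(-∞ - b)/a = -∞`).  For elements of `P₁` (or `P₂`) the clamping `min · 0` and
`projIcc` do nothing, so on `P₁` and `P₂` this is exactly the action of the paper. -/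
noncomputable def thetaAxB (g : AxB) (x : XIcc) : XIcc :=
  (⟨min ((((g.1.1 : ℝ)⁻¹ : ℝ) : EReal) * (x.1.1 - ((g.1.2 : ℝ) : EReal))) 0,
      min_le_right _ _⟩,
   Set.projIcc (0 : ℝ) 1 zero_le_one (x.2.1 / (g.1.1 : ℝ)))

/-!
Any two elements of `P₁` become elements of `P₂` after right multiplication by the dilation
by the product of their denominators, and `θ` is a right action of `P₁` by injective maps; hence both
semigroups produce the same `Q_x` and the same `u(x, g)`, and the identity of `X` together
with `(x, g) ↦ g` is a continuous orbit equivalence.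

No semigroup isomorphism `α : P₁ → P₂` exists at all. Translations `(1, c)` have `n`-th roots
in `P₁` for all `n`, so their images have first coordinate `1`, and `c ↦ (α (1, c)).2` is
additive. The relation `(3/2, 0)(1, 2) = (1, 3)(3/2, 0)` then forces the first coordinate of
`α (3/2, 0)` to be `3/2`, which is not an integer.
-/

open Function Set

section TransformationGroupoid

variable {G X : Type*} [Group G]

/-- Continuous orbit equivalence of the actions of `P₁` and `P₂` through `θ`, where `u₁`, `u₂`
are the maps `(x, g) ↦ u(x, g)` of the two actions. -/
def ContinuousOrbitEquivalent [TopologicalSpace G] [TopologicalSpace X] (P₁ P₂ : Set G)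
    (θ : G → X → X) (u₁ u₂ : X → G → X) : Prop :=
  ∃ (φ : X ≃ₜ X) (a : {q : X × G // q.2 ∈ Qset P₁ θ q.1} → G)
    (b : {q : X × G // q.2 ∈ Qset P₂ θ q.1} → G),
    Continuous a ∧ Continuous b ∧
    (∀ p : {q : X × G // q.2 ∈ Qset P₁ θ q.1},
      a p ∈ Qset P₂ θ (φ p.1.1) ∧ φ (u₁ p.1.1 p.1.2) = u₂ (φ p.1.1) (a p)) ∧
    (∀ q : {q : X × G // q.2 ∈ Qset P₂ θ q.1},
      b q ∈ Qset P₁ θ (φ.symm q.1.1) ∧ φ.symm (u₂ q.1.1 q.1.2) = u₁ (φ.symm q.1.1) (b q))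

theorem continuousOrbitEquivalent_of_Qset_eq [TopologicalSpace G] [TopologicalSpace X]
    {P₁ P₂ : Set G} {θ : G → X → X} {u₁ u₂ : X → G → X}
    (hQ : ∀ x, Qset P₁ θ x = Qset P₂ θ x) (hu : ∀ x, ∀ g ∈ Qset P₁ θ x, u₁ x g = u₂ x g) :
    ContinuousOrbitEquivalent P₁ P₂ θ u₁ u₂ := by
  refine ⟨.refl X, fun p ↦ p.1.2, fun q ↦ q.1.2, by fun_prop, by fun_prop,
    fun p ↦ ⟨hQ _ ▸ p.2, hu _ _ p.2⟩, fun q ↦ ⟨(hQ _).symm ▸ q.2, ?_⟩⟩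
  exact (hu _ _ ((hQ _).symm ▸ q.2)).symm

variable {P P' : Set G} {θ : G → X → X}

theorem Qset_mono (hsub : P' ⊆ P) (x : X) : Qset P' θ x ⊆ Qset P θ x :=
  fun _ ⟨a, ha, b, hb, y, hg, hθ⟩ ↦ ⟨a, hsub ha, b, hsub hb, y, hg, hθ⟩

theorem Qset_eq_of_cofinal (hsub : P' ⊆ P)
    (hθ : ∀ g ∈ P, ∀ h ∈ P, ∀ x, θ h (θ g x) = θ (g * h) x)
    (hcofinal : ∀ a ∈ P, ∀ b ∈ P, ∃ p ∈ P, a * p ∈ P' ∧ b * p ∈ P') (x : X) :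
    Qset P θ x = Qset P' θ x := by
  refine (Subset.antisymm ?_ (Qset_mono hsub x))
  rintro g ⟨a, ha, b, hb, y, rfl, hxy⟩
  obtain ⟨p, hp, hap, hbp⟩ := hcofinal a ha b hb
  refine ⟨a * p, hap, b * p, hbp, y, by group, ?_⟩
  rw [← hθ a ha p hp, ← hθ b hb p hp, hxy]

theorem eq_on_Qset_of_Qset_eq (hsub : P' ⊆ P) (hinj : ∀ b ∈ P', Injective (θ b))
    (hQ : ∀ x, Qset P θ x = Qset P' θ x) {u u' : X → G → X}
    (hu : ∀ x, ∀ g ∈ Qset P θ x, ∀ a ∈ P, ∀ b ∈ P, g = a * b⁻¹ → θ a x = θ b (u x g))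
    (hu' : ∀ x, ∀ g ∈ Qset P' θ x, ∀ a ∈ P', ∀ b ∈ P', g = a * b⁻¹ → θ a x = θ b (u' x g))
    (x : X) (g : G) (hg : g ∈ Qset P θ x) : u x g = u' x g := by
  obtain ⟨a, ha, b, hb, -, hab, -⟩ := hQ x ▸ hg
  exact hinj b hb <|
    (hu x g hg a (hsub ha) b (hsub hb) hab).symm.trans (hu' x g (hQ x ▸ hg) a ha b hb hab)

end TransformationGroupoid

namespace AxB

theorem mul_fst (p q : AxB) : (p * q).1.1 = p.1.1 * q.1.1 := rfl

theorem mul_snd (p q : AxB) : (p * q).1.2 = p.1.1 * q.1.2 + p.1.2 := rfl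

theorem one_fst : (1 : AxB).1.1 = 1 := rfl

theorem one_snd : (1 : AxB).1.2 = 0 := rfl

theorem pow_fst (m : AxB) (k : ℕ) : (m ^ k).1.1 = m.1.1 ^ k := by
  induction k with
  | zero => rw [pow_zero, pow_zero, one_fst]
  | succ n ih => rw [pow_succ, mul_fst, ih, pow_succ]

def translation (c : ℚ) : AxB := ⟨(1, c), one_pos⟩

def dilation (r : ℚ) (hr : 0 < r) : AxB := ⟨(r, 0), hr⟩

theorem translation_zero : translation 0 = 1 := rfl

theorem translation_mul (c d : ℚ) : translation c * translation d = translation (c + d) :=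
  Subtype.ext <| Prod.ext (one_mul 1) (by simp [translation, mul_snd, add_comm])

theorem translation_pow (c : ℚ) (k : ℕ) : translation c ^ k = translation (k * c) := by
  induction k with
  | zero => simp [translation_zero]
  | succ n ih => rw [pow_succ, ih, translation_mul]; push_cast; ring_nf

theorem dilation_mul_translation (r : ℚ) (hr : 0 < r) (c : ℚ) :
    dilation r hr * translation c = translation (r * c) * dilation r hr :=
  Subtype.ext <| Prod.ext (by simp [dilation, translation, mul_fst])
    (by simp [dilation, translation, mul_snd])

end AxB

open AxB

theorem one_mem_Pone : (1 : AxB) ∈ Pone := ⟨le_rfl, le_rfl⟩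

theorem mul_mem_Pone {g h : AxB} (hg : g ∈ Pone) (hh : h ∈ Pone) : g * h ∈ Pone :=
  ⟨one_le_mul_of_one_le_of_one_le hg.1 hh.1,
    add_nonneg (mul_nonneg (zero_le_one.trans hg.1) hh.2) hg.2⟩

theorem pow_mem_Pone {m : AxB} (hm : m ∈ Pone) (k : ℕ) : m ^ k ∈ Pone := by
  induction k with
  | zero => exact one_mem_Pone
  | succ n ih => rw [pow_succ]; exact mul_mem_Pone ih hm

theorem translation_mem_Pone {c : ℚ} (hc : 0 ≤ c) : translation c ∈ Pone := ⟨le_rfl, hc⟩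

theorem dilation_mem_Pone {r : ℚ} (hr : 1 ≤ r) : dilation r (zero_lt_one.trans_le hr) ∈ Pone :=
  ⟨hr, le_rfl⟩

theorem Ptwo_subset_Pone : Ptwo ⊆ Pone := by
  rintro g ⟨⟨n, hn⟩, hb⟩
  have hn0 : (0 : ℚ) < n := hn ▸ g.2
  exact ⟨hn ▸ Nat.one_le_cast.2 (Nat.cast_pos.1 hn0), hb⟩

theorem mul_dilation_mem_Ptwo {g : AxB} (hg : g ∈ Pone) {r : ℚ} (hr : 0 < r)
    (hden : ∃ k : ℕ, r = g.1.1.den * k) : g * dilation r hr ∈ Ptwo := by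
  obtain ⟨k, rfl⟩ := hden
  refine ⟨⟨g.1.1.num.toNat * k, ?_⟩, by simpa [mul_snd, dilation] using hg.2⟩
  rw [mul_fst, dilation, ← mul_assoc, Rat.mul_den_eq_num, Nat.cast_mul]
  exact_mod_cast congrArg (· * (k : ℤ))
    (Int.toNat_of_nonneg (Rat.num_nonneg.2 (zero_le_one.trans hg.1))).symm

theorem Pone_cofinal_Ptwo (a : AxB) (ha : a ∈ Pone) (b : AxB) (hb : b ∈ Pone) :
    ∃ p ∈ Pone, a * p ∈ Ptwo ∧ b * p ∈ Ptwo := by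
  have hd : (1 : ℚ) ≤ a.1.1.den * b.1.1.den := by
    exact_mod_cast Nat.one_le_iff_ne_zero.2 (Nat.mul_ne_zero a.1.1.den_nz b.1.1.den_nz)
  exact ⟨_, dilation_mem_Pone hd, mul_dilation_mem_Ptwo ha _ ⟨_, rfl⟩,
    mul_dilation_mem_Ptwo hb _ ⟨_, mul_comm _ _⟩⟩

theorem EReal.coe_mul_sub_nonpos {c b : ℝ} (hc : 0 ≤ c) (hb : 0 ≤ b) {t : EReal} (ht : t ≤ 0) :
    (c : EReal) * (t - b) ≤ 0 :=
  mul_nonpos_of_nonneg_of_nonpos (by exact_mod_cast hc)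
    (EReal.sub_nonpos.2 (ht.trans (by exact_mod_cast hb)))

theorem EReal.coe_inv_mul_sub_coe_inv_mul_sub {a₁ a₂ : ℝ} (ha₁ : 0 < a₁) (ha₂ : 0 < a₂)
    (b₁ b₂ : ℝ) {t : EReal} (ht : t ≠ ⊤) :
    ((a₂⁻¹ : ℝ) : EReal) * (((a₁⁻¹ : ℝ) : EReal) * (t - b₁) - b₂)
      = (((a₁ * a₂)⁻¹ : ℝ) : EReal) * (t - ((a₁ * b₂ + b₁ : ℝ) : EReal)) := by
  induction t using EReal.rec with
  | bot =>
    simp only [EReal.bot_sub, EReal.coe_mul_bot_of_pos (inv_pos.2 ha₁),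
      EReal.coe_mul_bot_of_pos (inv_pos.2 ha₂),
      EReal.coe_mul_bot_of_pos (inv_pos.2 (mul_pos ha₁ ha₂))]
  | coe r =>
    norm_cast
    field_simp
    ring
  | top => exact absurd rfl ht

theorem thetaAxB_fst_of_mem {g : AxB} (hg : g ∈ Pone) (x : XIcc) :
    ((thetaAxB g x).1 : EReal) = (((g.1.1 : ℝ)⁻¹ : ℝ) : EReal) * (x.1 - ((g.1.2 : ℝ) : EReal)) :=
  min_eq_left (EReal.coe_mul_sub_nonpos (inv_nonneg.2 (by exact_mod_cast g.2.le))
    (by exact_mod_cast hg.2) x.1.2)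

theorem thetaAxB_snd (g : AxB) (x : XIcc) :
    ((thetaAxB g x).2 : ℝ) = Set.projIcc 0 1 zero_le_one (x.2 / (g.1.1 : ℝ)) := rfl

theorem thetaAxB_snd_of_mem {g : AxB} (hg : g ∈ Pone) (x : XIcc) :
    ((thetaAxB g x).2 : ℝ) = x.2 / (g.1.1 : ℝ) := by
  have hg₁ : (1 : ℝ) ≤ g.1.1 := by exact_mod_cast hg.1
  exact congrArg Subtype.val <| Set.projIcc_of_mem zero_le_one
    ⟨div_nonneg x.2.2.1 (zero_le_one.trans hg₁),
      div_le_one_of_le₀ (x.2.2.2.trans hg₁) (zero_le_one.trans hg₁)⟩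

theorem thetaAxB_one (x : XIcc) : thetaAxB 1 x = x := by
  refine Prod.ext (Subtype.ext ?_) (Subtype.ext ?_)
  · simp [thetaAxB, one_fst, one_snd, x.1.2]
  · simp [thetaAxB, one_fst]

/-- `θ` is a right action as long as the first factor lies in `P₁`: then `θ_g` lands in the
region where the clamping in the definition of `thetaAxB` is inactive. -/
theorem thetaAxB_thetaAxB {g : AxB} (hg : g ∈ Pone) (h : AxB) (x : XIcc) :
    thetaAxB h (thetaAxB g x) = thetaAxB (g * h) x := by
  have hg₁ : (0 : ℝ) < g.1.1 := by exact_mod_cast g.2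
  have hh₁ : (0 : ℝ) < h.1.1 := by exact_mod_cast h.2
  refine Prod.ext (Subtype.ext ?_) (Subtype.ext ?_)
  · change min _ 0 = min _ 0
    rw [thetaAxB_fst_of_mem hg, EReal.coe_inv_mul_sub_coe_inv_mul_sub hg₁ hh₁ _ _
      (ne_top_of_le_ne_top EReal.zero_ne_top x.1.2)]
    push_cast [mul_fst, mul_snd]
    rfl
  · rw [thetaAxB_snd h, thetaAxB_snd (g * h), thetaAxB_snd_of_mem hg, div_div]
    push_cast [mul_fst]
    rfl

theorem thetaAxB_injective {g : AxB} (hg : g ∈ Pone) : Injective (thetaAxB g) :=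
  LeftInverse.injective (g := thetaAxB g⁻¹) fun x ↦ by
    rw [thetaAxB_thetaAxB hg, mul_inv_cancel, thetaAxB_one]

theorem Nat.eq_one_of_self_eq_pow {n m : ℕ} (hn : 0 < n) (h : n = m ^ n) : m = 1 := by
  rcases m with _ | _ | m
  · rw [zero_pow hn.ne'] at h
    omega
  · rfl
  · exact absurd h (Nat.lt_pow_self (by omega)).ne

section NoIsomorphism

variable {α : AxB → AxB} (hmaps : MapsTo α Pone Ptwo)
  (hmul : ∀ m ∈ Pone, ∀ n ∈ Pone, α (m * n) = α m * α n)
include hmul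

theorem map_one_of_map_mul : α 1 = 1 := by
  have h := hmul 1 one_mem_Pone 1 one_mem_Pone
  rwa [mul_one, left_eq_mul] at h

theorem map_pow_of_map_mul {m : AxB} (hm : m ∈ Pone) (k : ℕ) : α (m ^ k) = α m ^ k := by
  induction k with
  | zero => exact map_one_of_map_mul hmul
  | succ n ih => rw [pow_succ, hmul _ (pow_mem_Pone hm n) _ hm, ih, pow_succ]

include hmaps

theorem fst_map_translation {c : ℚ} (hc : 0 ≤ c) : (α (translation c)).1.1 = 1 := by
  obtain ⟨n, hn⟩ := (hmaps (translation_mem_Pone hc)).1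
  have hn0 : 0 < n := by exact_mod_cast hn ▸ (α (translation c)).2
  have hc' : 0 ≤ c / n := div_nonneg hc n.cast_nonneg
  obtain ⟨m, hm⟩ := (hmaps (translation_mem_Pone hc')).1
  have hroot : translation (c / n) ^ n = translation c := by
    rw [translation_pow, mul_div_cancel₀ _ (by exact_mod_cast hn0.ne')]
  have hpow : (n : ℚ) = (m : ℚ) ^ n := by
    rw [← hn, ← hroot, map_pow_of_map_mul hmul (translation_mem_Pone hc'), pow_fst, hm]
  replace hpow : n = m ^ n := by exact_mod_cast hpow
  rw [hn, hpow, Nat.eq_one_of_self_eq_pow hn0 hpow, one_pow, Nat.cast_one]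

theorem snd_map_translation_add {c d : ℚ} (hc : 0 ≤ c) (hd : 0 ≤ d) :
    (α (translation (c + d))).1.2 = (α (translation c)).1.2 + (α (translation d)).1.2 := by
  have h := congrArg (fun z : AxB ↦ z.1.2) (hmul _ (translation_mem_Pone hc) _
    (translation_mem_Pone hd))
  simp only [translation_mul, mul_snd, fst_map_translation hmaps hmul hc, one_mul] at h
  rw [h, add_comm]

theorem snd_map_translation_natCast_mul (k : ℕ) {c : ℚ} (hc : 0 ≤ c) :
    (α (translation (k * c))).1.2 = k * (α (translation c)).1.2 := by
  induction k with
  | zero => simp [translation_zero, map_one_of_map_mul hmul, one_snd]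
  | succ k ih =>
    rw [Nat.cast_succ, add_one_mul, snd_map_translation_add hmaps hmul
      (mul_nonneg k.cast_nonneg hc) hc, ih, add_one_mul]

theorem snd_map_translation_one_ne_zero (hinj : InjOn α Pone) : (α (translation 1)).1.2 ≠ 0 := by
  intro h0
  have h : α (translation 1) = α (translation 0) := by
    refine Subtype.ext (Prod.ext ?_ ?_)
    · rw [fst_map_translation hmaps hmul zero_le_one, fst_map_translation hmaps hmul le_rfl]
    · rw [translation_zero, map_one_of_map_mul hmul]
      exact h0
  have := hinj (translation_mem_Pone zero_le_one) (translation_mem_Pone le_rfl) h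
  simp [translation] at this

end NoIsomorphism

theorem not_exists_mul_injOn_Pone_Ptwo :
    ¬ ∃ α : AxB → AxB, MapsTo α Pone Ptwo ∧ InjOn α Pone ∧
      ∀ m ∈ Pone, ∀ n ∈ Pone, α (m * n) = α m * α n := by
  rintro ⟨α, hmaps, hinj, hmul⟩
  have hd : (1 : ℚ) ≤ 3 / 2 := by norm_num
  have hrel := congrArg (fun z ↦ (α z).1.2)
    (dilation_mul_translation (3 / 2) (zero_lt_one.trans_le hd) 2)
  rw [show (3 / 2 : ℚ) * 2 = 3 by norm_num,
    hmul _ (dilation_mem_Pone hd) _ (translation_mem_Pone zero_le_two),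
    hmul _ (translation_mem_Pone zero_le_three) _ (dilation_mem_Pone hd)] at hrel
  have h2 := snd_map_translation_natCast_mul hmaps hmul 2 zero_le_one
  have h3 := snd_map_translation_natCast_mul hmaps hmul 3 zero_le_one
  simp only [Nat.cast_ofNat, mul_one] at h2 h3
  obtain ⟨n, hn⟩ := (hmaps (dilation_mem_Pone hd)).1
  simp only [mul_snd, fst_map_translation hmaps hmul zero_le_three, h2, h3, hn] at hrel
  have : ((n * 2 : ℕ) : ℚ) = (3 : ℕ) := by
    push_cast
    exact mul_right_cancel₀ (snd_map_translation_one_ne_zero hmaps hmul hinj)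
      (by linear_combination hrel)
  replace this : n * 2 = 3 := by exact_mod_cast this
  omega

/-- for the actions of `P₁` and `P₂` on `X = [-∞, 0] × [0, 1]`:
`Q_x` is the same for both actions, with the same `u(x, g)`; hence the transformation
groupoids `X ⋊ P₁` and `X ⋊ P₂` coincide and the two actions are continuously orbit
equivalent.  However, they are not conjugate. -/
theorem stmt_14
    (u₁ u₂ : XIcc → AxB → XIcc)
    (hu₁ : ∀ x : XIcc, ∀ g ∈ Qset Pone thetaAxB x, ∀ a ∈ Pone, ∀ b ∈ Pone,
      g = a * b⁻¹ → thetaAxB a x = thetaAxB b (u₁ x g))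
    (hu₂ : ∀ x : XIcc, ∀ g ∈ Qset Ptwo thetaAxB x, ∀ a ∈ Ptwo, ∀ b ∈ Ptwo,
      g = a * b⁻¹ → thetaAxB a x = thetaAxB b (u₂ x g)) :
    (∀ (x : XIcc) (g : AxB), g ∈ Qset Pone thetaAxB x ↔ g ∈ Qset Ptwo thetaAxB x) ∧
    ({p : XIcc × AxB | p.2 ∈ Qset Pone thetaAxB p.1}
        = {p : XIcc × AxB | p.2 ∈ Qset Ptwo thetaAxB p.1}) ∧
    (∀ (x : XIcc) (g : AxB), g ∈ Qset Pone thetaAxB x → u₁ x g = u₂ x g) ∧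
    (∃ (φ : XIcc ≃ₜ XIcc)
        (a : {q : XIcc × AxB // q.2 ∈ Qset Pone thetaAxB q.1} → AxB)
        (b : {q : XIcc × AxB // q.2 ∈ Qset Ptwo thetaAxB q.1} → AxB),
      Continuous a ∧ Continuous b ∧
      (∀ p : {q : XIcc × AxB // q.2 ∈ Qset Pone thetaAxB q.1},
        a p ∈ Qset Ptwo thetaAxB (φ p.1.1) ∧
        φ (u₁ p.1.1 p.1.2) = u₂ (φ p.1.1) (a p)) ∧
      (∀ q : {q : XIcc × AxB // q.2 ∈ Qset Ptwo thetaAxB q.1},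
        b q ∈ Qset Pone thetaAxB (φ.symm q.1.1) ∧
        φ.symm (u₂ q.1.1 q.1.2) = u₁ (φ.symm q.1.1) (b q))) ∧
    ¬ (∃ (φ : XIcc ≃ₜ XIcc) (α : AxB → AxB),
        Set.BijOn α Pone Ptwo ∧
        (∀ m ∈ Pone, ∀ n ∈ Pone, α (m * n) = α m * α n) ∧
        (∀ m ∈ Pone, ∀ x : XIcc, φ (thetaAxB m x) = thetaAxB (α m) (φ x))) := by
  have hQ : ∀ x, Qset Pone thetaAxB x = Qset Ptwo thetaAxB x :=
    Qset_eq_of_cofinal Ptwo_subset_Pone (fun g hg h _ x ↦ thetaAxB_thetaAxB hg h x)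
      Pone_cofinal_Ptwo
  have hu : ∀ x, ∀ g ∈ Qset Pone thetaAxB x, u₁ x g = u₂ x g :=
    eq_on_Qset_of_Qset_eq Ptwo_subset_Pone
      (fun b hb ↦ thetaAxB_injective (Ptwo_subset_Pone hb)) hQ hu₁ hu₂
  refine ⟨fun x g ↦ by rw [hQ], by simp only [hQ], hu,
    continuousOrbitEquivalent_of_Qset_eq hQ hu, ?_⟩
  rintro ⟨-, α, hbij, hmul, -⟩
  exact not_exists_mul_injOn_Pone_Ptwo ⟨α, hbij.mapsTo, hbij.injOn, hmul⟩
end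

section
/- For every a ∈ P, β_a(Ỹ) ⊆ Ỹ and β_a(Ỹ) = {ξ ∈ Ỹ : ξ(a) = 1}; in particular β_a(Ỹ) is an open subset of Ỹ. Consequently β restricts to a right injective action of P on the compact space Ỹ whose image sets β_a(Ỹ) are open in Ỹ. -/
attribute [local instance] Classical.propDecidable

/-- The right shift action of `G` on `{0, 1}^G` (modelled as `G → Bool`):
`β_g(ξ)(h) = ξ(h g⁻¹)`. -/
def shiftB {G : Type*} [Group G] (g : G) (ξ : G → Bool) : G → Bool :=
  fun h => ξ (h * g⁻¹)

/-- The characteristic function `χ_A : G → Bool` of a subset `A ⊆ G`. -/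
noncomputable def chiB {G : Type*} (A : Set G) : G → Bool :=
  fun k => if k ∈ A then true else false

/-- `Ỹ`: the closure in `{0, 1}^G` of `{χ_{S⁻¹h} : h ∈ S}`. -/
noncomputable def Ytil {G : Type*} [Group G] (S : Set G) : Set (G → Bool) :=
  closure {ξ : G → Bool | ∃ h ∈ S, ξ = chiB {k : G | ∃ s ∈ S, k = s⁻¹ * h}}

/-!
`β_a` sends `χ_{S⁻¹h}` to `χ_{S⁻¹ha}`, so `S a ⊆ S` makes `β_a` preserve the generators of `Ỹ`,
hence `Ỹ` itself by continuity. Every `ξ ∈ Ỹ` has `ξ(e) = 1` (as `e ∈ S⁻¹h` for `h ∈ S`), which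
gives `β_a(Ỹ) ⊆ {ξ(a) = 1}`. Conversely a generator with `χ_{S⁻¹h}(a) = 1` has `h = s a` with
`s ∈ S`, so it is `β_a χ_{S⁻¹s}`; since `{ξ(a) = 1}` is open and `β_a` is a homeomorphism of a
compact Hausdorff space, this passes to the closure.
-/

lemma chiB_eq_true_iff {α : Type*} (A : Set α) (x : α) : chiB A x = true ↔ x ∈ A := by
  by_cases h : x ∈ A <;> simp [chiB, h]

lemma isClopen_setOf_apply_eq_true {ι : Type*} (i : ι) : IsClopen {ξ : ι → Bool | ξ i = true} :=
  (isClopen_discrete {true}).preimage (continuous_apply (A := fun _ : ι => Bool) i)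

section Shift

variable {G : Type*} [Group G]

lemma shiftB_one : shiftB (1 : G) = id := by
  funext ξ h
  simp [shiftB]

lemma shiftB_shiftB (a b : G) (ξ : G → Bool) : shiftB a (shiftB b ξ) = shiftB (b * a) ξ := by
  funext h
  simp [shiftB, mul_assoc]

lemma continuous_shiftB (g : G) : Continuous (shiftB g) :=
  continuous_pi fun h => continuous_apply (h * g⁻¹)

lemma shiftB_injective (g : G) : Function.Injective (shiftB g) :=
  Function.LeftInverse.injective (g := shiftB g⁻¹) fun ξ => by
    rw [shiftB_shiftB, mul_inv_cancel, shiftB_one, id]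

lemma shiftB_chiB (a : G) (A : Set G) : shiftB a (chiB A) = chiB {k | k * a⁻¹ ∈ A} := rfl

end Shift

section Ytil

variable {G : Type*} [Group G] (S : Set G)

/-- The set `S⁻¹h`. -/
def invMulSet (h : G) : Set G := {k | ∃ s ∈ S, k = s⁻¹ * h}

/-- The generators `χ_{S⁻¹h}`, `h ∈ S`, of `Ỹ`. -/
def chiGenerators : Set (G → Bool) := {ξ | ∃ h ∈ S, ξ = chiB (invMulSet S h)}

lemma Ytil_eq_closure : Ytil S = closure (chiGenerators S) := rfl

lemma shiftB_chiB_invMulSet (a h : G) :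
    shiftB a (chiB (invMulSet S h)) = chiB (invMulSet S (h * a)) := by
  rw [shiftB_chiB]
  congr 1
  ext k
  simp only [invMulSet, Set.mem_ofPred_eq, ← mul_assoc, mul_inv_eq_iff_eq_mul]

lemma isCompact_Ytil : IsCompact (Ytil S) := isClosed_closure.isCompact

lemma apply_one_of_mem_Ytil {ξ : G → Bool} (hξ : ξ ∈ Ytil S) : ξ 1 = true := by
  refine (isClopen_setOf_apply_eq_true 1).isClosed.closure_subset_iff.2 ?_ hξ
  rintro _ ⟨h, hh, rfl⟩
  exact (chiB_eq_true_iff _ _).2 ⟨h, hh, (inv_mul_cancel h).symm⟩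

variable {S}

lemma mapsTo_shiftB_Ytil {a : G} (hSa : ∀ s ∈ S, s * a ∈ S) :
    Set.MapsTo (shiftB a) (Ytil S) (Ytil S) := by
  have hgen : Set.MapsTo (shiftB a) (chiGenerators S) (chiGenerators S) := by
    rintro _ ⟨h, hh, rfl⟩
    exact ⟨h * a, hSa h hh, shiftB_chiB_invMulSet S a h⟩
  exact hgen.closure (continuous_shiftB a)

lemma setOf_apply_eq_true_inter_chiGenerators_subset (a : G) :
    {ξ | ξ a = true} ∩ chiGenerators S ⊆ shiftB a '' chiGenerators S := by
  rintro _ ⟨hξa, h, hh, rfl⟩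
  obtain ⟨s, hs, rfl⟩ := (chiB_eq_true_iff _ _).1 hξa
  refine ⟨_, ⟨s, hs, rfl⟩, ?_⟩
  rw [shiftB_chiB_invMulSet, mul_inv_cancel_left]

lemma image_shiftB_Ytil {a : G} (hSa : ∀ s ∈ S, s * a ∈ S) :
    shiftB a '' Ytil S = {ξ ∈ Ytil S | ξ a = true} := by
  refine Set.Subset.antisymm ?_ fun ξ ⟨hξ, hξa⟩ => ?_
  · rintro _ ⟨η, hη, rfl⟩
    refine ⟨mapsTo_shiftB_Ytil hSa hη, ?_⟩
    simpa [shiftB] using apply_one_of_mem_Ytil S hη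
  · have hξ' : ξ ∈ closure ({ξ | ξ a = true} ∩ chiGenerators S) :=
      (isClopen_setOf_apply_eq_true a).isOpen.inter_closure ⟨hξa, hξ⟩
    rw [Ytil_eq_closure, image_closure_of_isCompact isClosed_closure.isCompact
      (continuous_shiftB a).continuousOn]
    exact closure_mono (setOf_apply_eq_true_inter_chiGenerators_subset a) hξ'

lemma isOpen_val_preimage_setOf_apply_eq_true (a : G) :
    IsOpen (Subtype.val ⁻¹' {ξ ∈ Ytil S | ξ a = true} : Set (Ytil S)) := by
  rw [← Set.inter_ofPred_eq_sep, Subtype.preimage_coe_self_inter]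
  exact (isClopen_setOf_apply_eq_true a).isOpen.preimage continuous_subtype_val

end Ytil

theorem stmt_16_general {G : Type*} [Group G]
    (P : Set G)
    (S : Set G) (hSP : ∀ s ∈ S, ∀ p ∈ P, s * p ∈ S) :
    (shiftB (1 : G) = (id : (G → Bool) → G → Bool)) ∧
    (∀ a b : G, ∀ ξ : G → Bool, shiftB a (shiftB b ξ) = shiftB (b * a) ξ) ∧
    IsCompact (Ytil S) ∧
    (∀ a ∈ P,
      Set.MapsTo (shiftB a) (Ytil S) (Ytil S) ∧
      Set.InjOn (shiftB a) (Ytil S) ∧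
      Continuous (shiftB a) ∧
      shiftB a '' Ytil S = {ξ ∈ Ytil S | ξ a = true} ∧
      IsOpen (Subtype.val ⁻¹' (shiftB a '' Ytil S) : Set (Ytil S))) := by
  refine ⟨shiftB_one, shiftB_shiftB, isCompact_Ytil S, fun a ha => ?_⟩
  have hSa : ∀ s ∈ S, s * a ∈ S := fun s hs => hSP s hs a ha
  rw [image_shiftB_Ytil hSa]
  exact ⟨mapsTo_shiftB_Ytil hSa, (shiftB_injective a).injOn, continuous_shiftB a, rfl,
    isOpen_val_preimage_setOf_apply_eq_true a⟩

/-- assume `P ⊆ S ⊆ G` and `S P ⊆ S`. For every `a ∈ P`: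
`β_a(Ỹ) ⊆ Ỹ`, in fact `β_a(Ỹ) = {ξ ∈ Ỹ : ξ(a) = 1}`, which is open in `Ỹ`; hence the
shift `β` restricts to a right injective action of `P` on the compact space `Ỹ` (by
continuous injective maps satisfying `β_a ∘ β_b = β_{ba}` and `β_e = id`) with open
image sets. -/
theorem stmt_16 {G : Type*} [Group G] [Countable G]
    (P : Set G) (hP1 : (1 : G) ∈ P) (hPmul : ∀ a ∈ P, ∀ b ∈ P, a * b ∈ P)
    (hPG : ∀ g : G, ∃ a ∈ P, ∃ b ∈ P, g = a * b⁻¹)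
    (S : Set G) (hPS : P ⊆ S) (hSP : ∀ s ∈ S, ∀ p ∈ P, s * p ∈ S) :
    (shiftB (1 : G) = (id : (G → Bool) → G → Bool)) ∧
    (∀ a b : G, ∀ ξ : G → Bool, shiftB a (shiftB b ξ) = shiftB (b * a) ξ) ∧
    IsCompact (Ytil S) ∧
    (∀ a ∈ P,
      Set.MapsTo (shiftB a) (Ytil S) (Ytil S) ∧
      Set.InjOn (shiftB a) (Ytil S) ∧
      Continuous (shiftB a) ∧
      shiftB a '' Ytil S = {ξ ∈ Ytil S | ξ a = true} ∧
      IsOpen (Subtype.val ⁻¹' (shiftB a '' Ytil S) : Set (Ytil S))) :=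
  stmt_16_general P S hSP
end
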